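/- arXiv:2603.12425 — 9 statements merged into one kernel-verified Lean document; each statement's English description precedes it below -/
import Mathlib

section
/- A real number x is rational if and only if there exists a matrix M = !![a, b; c, d] in SL(2, ℤ) with M ≠ 1, M ≠ -1, |a + d| = 2 (i.e. M is parabolic), and a·x + b = x·(c·x + d) (i.e. x is a fixed point of the Möbius transformation associated to M). -/
/-!
A parabolic `M = !![a, b; c, d]` has discriminant `(a + d)² - 4 = 0`, so a real fixed point is a double
root of `c x² + (d - a) x - b`, namely `(a - d) / 2c`, which is rational; conversely a
rational point is `γ • ∞` for some `γ ∈ SL(2, ℤ)` and is fixed by `γ T γ⁻¹`. Both directions are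
Mathlib's `isCusp_SL2Z_iff` (the cusps of `SL(2, ℤ)` are `ℙ¹(ℚ)`), once parabolicity in
`GL(2, ℝ)` and the action on `OnePoint ℝ` are written in coordinates.
-/

open Matrix
open scoped MatrixGroups

lemma OnePoint.coe_mem_range_map_iff {X Y : Type*} (f : X → Y) (y : Y) :
    (y : OnePoint Y) ∈ Set.range (OnePoint.map f) ↔ y ∈ Set.range f := by
  constructor
  · rintro ⟨_ | x, hx⟩
    · exact absurd hx (OnePoint.infty_ne_coe y)
    · exact ⟨x, OnePoint.coe_injective hx⟩
  · rintro ⟨x, rfl⟩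
    exact ⟨x, rfl⟩

namespace Matrix

lemma mem_range_scalar_fin_two_iff {R : Type*} [CommRing R] (A : Matrix (Fin 2) (Fin 2) R) :
    A ∈ Set.range (scalar (Fin 2)) ↔ A 0 1 = 0 ∧ A 1 0 = 0 ∧ A 0 0 = A 1 1 := by
  constructor
  · rintro ⟨a, rfl⟩
    simp
  · rintro ⟨hb, hc, had⟩
    refine ⟨A 0 0, ?_⟩
    ext i j
    fin_cases i <;> fin_cases j <;> simp [hb, hc, had]

namespace SpecialLinearGroup

lemma coe_mem_range_scalar_iff {R : Type*} [CommRing R] [NoZeroDivisors R] (M : SL(2, R)) :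
    (M : Matrix (Fin 2) (Fin 2) R) ∈ Set.range (scalar (Fin 2)) ↔ M = 1 ∨ M = -1 := by
  constructor
  · rintro ⟨a, ha⟩
    have ha2 : a ^ 2 = 1 := by
      simpa [det_fin_two, sq] using (congrArg det ha).trans M.det_coe
    rcases sq_eq_one_iff.mp ha2 with rfl | rfl
    · exact .inl (Subtype.ext (by simpa using ha.symm))
    · exact .inr (Subtype.ext (by simpa [map_neg] using ha.symm))
  · rintro (rfl | rfl)
    · exact ⟨1, map_one _⟩
    · exact ⟨-1, by simp [map_neg]⟩

lemma mapGL_apply {K : Type*} [Field K] (M : SL(2, ℤ)) (i j : Fin 2) :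
    mapGL K M i j = (M i j : K) := by
  simp

variable {K : Type*} [Field K] [CharZero K]

lemma mapGL_mem_range_scalar_iff (M : SL(2, ℤ)) :
    (mapGL K M).val ∈ Set.range (scalar (Fin 2)) ↔ M = 1 ∨ M = -1 := by
  rw [← coe_mem_range_scalar_iff, mem_range_scalar_fin_two_iff, mem_range_scalar_fin_two_iff]
  simp

lemma discr_mapGL_eq_zero_iff (M : SL(2, ℤ)) :
    (mapGL K M).val.discr = 0 ↔ |M 0 0 + M 1 1| = 2 := by
  have : (mapGL K M).val.discr = (((M 0 0 + M 1 1) ^ 2 - 4 : ℤ) : K) := by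
    rw [discr_fin_two, trace_fin_two, ← GeneralLinearGroup.val_det_apply, det_mapGL]
    simp
  rw [this, Int.cast_eq_zero, sub_eq_zero, show (4 : ℤ) = 2 ^ 2 by norm_num,
    sq_eq_sq_iff_abs_eq_abs, abs_two]

lemma isParabolic_mapGL_iff (M : SL(2, ℤ)) :
    (mapGL K M).IsParabolic ↔ M ≠ 1 ∧ M ≠ -1 ∧ |M 0 0 + M 1 1| = 2 := by
  rw [GeneralLinearGroup.IsParabolic, IsParabolic, mapGL_mem_range_scalar_iff,
    discr_mapGL_eq_zero_iff, not_or, and_assoc]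

end SpecialLinearGroup

lemma GeneralLinearGroup.smul_coe_eq_self_iff {K : Type*} [Field K] [DecidableEq K]
    (g : GL (Fin 2) K) (x : K) :
    g • (x : OnePoint K) = x ↔ g 0 0 * x + g 0 1 = x * (g 1 0 * x + g 1 1) := by
  rw [← fixpointPolynomial_aeval_eq_zero_iff, fixpointPolynomial]
  simp only [map_sub, map_add, map_mul, map_pow, Polynomial.aeval_C, Polynomial.aeval_X,
    Algebra.algebraMap_self, RingHom.id_apply]
  constructor <;> intro h <;> linear_combination -h

end Matrix

/-- A real number `x` is rational if and only if it is a fixed point of a parabolic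
element of `SL(2, ℤ)` acting by Möbius transformations. -/
theorem rational_iff_parabolic_fixed_point (x : ℝ) :
    (∃ q : ℚ, (q : ℝ) = x) ↔
      ∃ M : Matrix.SpecialLinearGroup (Fin 2) ℤ,
        M ≠ 1 ∧ M ≠ -1 ∧
        |(M : Matrix (Fin 2) (Fin 2) ℤ) 0 0 + (M : Matrix (Fin 2) (Fin 2) ℤ) 1 1| = 2 ∧
        ((M : Matrix (Fin 2) (Fin 2) ℤ) 0 0 : ℝ) * x + ((M : Matrix (Fin 2) (Fin 2) ℤ) 0 1 : ℝ)
          = x * (((M : Matrix (Fin 2) (Fin 2) ℤ) 1 0 : ℝ) * x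
              + ((M : Matrix (Fin 2) (Fin 2) ℤ) 1 1 : ℝ)) := by
  rw [← Set.mem_range, ← OnePoint.coe_mem_range_map_iff, ← isCusp_SL2Z_iff]
  simp only [IsCusp, MonoidHom.mem_range, exists_exists_eq_and,
    SpecialLinearGroup.isParabolic_mapGL_iff,
    GeneralLinearGroup.smul_coe_eq_self_iff, SpecialLinearGroup.mapGL_apply, and_assoc]
end

section
/- A real number x is a quadratic surd — that is, x is irrational and there exist integers a, b, c with a ≠ 0 and a·x² + b·x + c = 0 — if and only if there exists a matrix M = !![a, b; c, d] in SL(2, ℤ) with |a + d| > 2 and a·x + b = x·(c·x + d). (Theorem 4.1: quadratic surds are exactly the fixed points of loxodromic transformations in SL(2, ℤ).) -/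
/-- If an integer quadratic with nonzero leading coefficient has a rational root,
then its discriminant is a perfect square. -/
lemma isSquare_of_rat_root (A B C : ℤ) (hA : A ≠ 0) (q : ℚ)
    (h : (A : ℝ) * (q : ℝ) ^ 2 + (B : ℝ) * (q : ℝ) + (C : ℝ) = 0) :
    IsSquare (B ^ 2 - 4 * A * C) := by
  have hq : (A : ℚ) * q ^ 2 + (B : ℚ) * q + (C : ℚ) = 0 := by exact_mod_cast h
  set m : ℤ := q.num with hm
  set n : ℤ := (q.den : ℤ) with hn
  have hn0 : n ≠ 0 := by
    rw [hn]; exact_mod_cast q.den_nz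
  have hqmn : (q : ℚ) = (m : ℚ) / (n : ℚ) := by
    rw [hm, hn]; push_cast; exact (Rat.num_div_den q).symm
  have hnq : (n : ℚ) ≠ 0 := Int.cast_ne_zero.mpr hn0
  have hmn : A * m ^ 2 + B * m * n + C * n ^ 2 = 0 := by
    have h2 : (A : ℚ) * m ^ 2 + B * m * n + C * n ^ 2 = 0 := by
      rw [hqmn] at hq
      field_simp at hq
      have h4 : (n : ℚ) * ((A : ℚ) * m ^ 2 + B * m * n + C * n ^ 2) = 0 := by
        linear_combination (n : ℚ) * hq
      exact (mul_eq_zero.mp h4).resolve_left hnq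
    exact_mod_cast h2
  have key : (2 * A * m + B * n) ^ 2 = (B ^ 2 - 4 * A * C) * n ^ 2 := by
    linear_combination 4 * A * hmn
  have hdvd : n ∣ 2 * A * m + B * n := by
    refine (Int.pow_dvd_pow_iff (two_ne_zero)).mp ?_
    exact ⟨B ^ 2 - 4 * A * C, by linarith [key]⟩
  obtain ⟨e, he⟩ := hdvd
  refine ⟨e, ?_⟩
  have hne : (n * e) ^ 2 = (B ^ 2 - 4 * A * C) * n ^ 2 := by rw [← he]; exact key
  have : n ^ 2 * (e * e) = n ^ 2 * (B ^ 2 - 4 * A * C) := by ring_nf; ring_nf at hne; linarith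
  exact (mul_left_cancel₀ (pow_ne_zero 2 hn0) this).symm

/-- A real number is a quadratic surd (irrational root of an integer quadratic)
if and only if it is a fixed point of a loxodromic element of `SL(2, ℤ)`. -/
theorem quadratic_surd_iff_loxodromic_fixed_point (x : ℝ) :
    (Irrational x ∧ ∃ a b c : ℤ, a ≠ 0 ∧ (a : ℝ) * x ^ 2 + (b : ℝ) * x + (c : ℝ) = 0) ↔
      ∃ M : Matrix.SpecialLinearGroup (Fin 2) ℤ,
        |(M : Matrix (Fin 2) (Fin 2) ℤ) 0 0 + (M : Matrix (Fin 2) (Fin 2) ℤ) 1 1| > 2 ∧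
        ((M : Matrix (Fin 2) (Fin 2) ℤ) 0 0 : ℝ) * x + ((M : Matrix (Fin 2) (Fin 2) ℤ) 0 1 : ℝ)
          = x * (((M : Matrix (Fin 2) (Fin 2) ℤ) 1 0 : ℝ) * x
              + ((M : Matrix (Fin 2) (Fin 2) ℤ) 1 1 : ℝ)) := by
  constructor
  · rintro ⟨hx, a, b, c, ha, hquad⟩
    set D : ℤ := b ^ 2 - 4 * a * c with hD
    -- D is not a perfect square
    have hDns : ¬ IsSquare D := by
      rintro ⟨e, he⟩
      have hsq : ((2 * a * x + b) - e) * ((2 * a * x + b) + e) = 0 := by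
        have hce : (e : ℝ) * e = (b : ℝ) ^ 2 - 4 * a * c := by exact_mod_cast he.symm
        linear_combination 4 * (a : ℝ) * hquad - hce
      have ha' : (a : ℝ) ≠ 0 := Int.cast_ne_zero.mpr ha
      rcases mul_eq_zero.mp hsq with h1 | h1
      · exact hx ⟨((e - b : ℤ) : ℚ) / ((2 * a : ℤ) : ℚ), by push_cast; field_simp; linarith⟩
      · exact hx ⟨((-e - b : ℤ) : ℚ) / ((2 * a : ℤ) : ℚ), by push_cast; field_simp; linarith⟩
    have hDpos : 0 < D := by
      have hsq : ((2 * a * x + b)) ^ 2 = (D : ℝ) := by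
        push_cast [hD]; linear_combination 4 * (a : ℝ) * hquad
      have : (0 : ℝ) ≤ (D : ℝ) := hsq ▸ sq_nonneg _
      have hD0 : 0 ≤ D := by exact_mod_cast this
      rcases hD0.lt_or_eq with h | h
      · exact h
      · exact absurd (h ▸ (⟨0, by ring⟩ : IsSquare (0 : ℤ))) (by rw [← h] at hDns ⊢; exact hDns)
    -- Pell solution
    obtain ⟨u, v, huv, hv⟩ := Pell.exists_of_not_isSquare hDpos hDns
    refine ⟨⟨!![u - v * b, -(2 * v * c); 2 * v * a, u + v * b], ?_⟩, ?_, ?_⟩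
    · rw [Matrix.det_fin_two_of]
      linear_combination huv - 4 * v ^ 2 * (hD ▸ rfl : D = b ^ 2 - 4 * a * c)
    · show |(u - v * b) + (u + v * b)| > 2
      have hv2 : 1 ≤ v ^ 2 := by
        rcases lt_or_gt_of_ne hv with h | h <;> nlinarith
      have hu2 : 2 ≤ u ^ 2 := by nlinarith
      have heq : (u - v * b) + (u + v * b) = 2 * u := by ring
      rw [heq]
      rcases le_or_gt 0 u with h | h
      · rw [abs_of_nonneg (by linarith)]; nlinarith
      · rw [abs_of_nonpos (by linarith)]; nlinarith
    · show ((u - v * b : ℤ) : ℝ) * x + ((-(2 * v * c) : ℤ) : ℝ)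
          = x * (((2 * v * a : ℤ) : ℝ) * x + ((u + v * b : ℤ) : ℝ))
      push_cast
      linear_combination (-2 : ℝ) * (v : ℝ) * hquad
  · rintro ⟨M, htr, hfix⟩
    set A : ℤ := (M : Matrix (Fin 2) (Fin 2) ℤ) 0 0 with hA
    set B : ℤ := (M : Matrix (Fin 2) (Fin 2) ℤ) 0 1 with hB
    set C : ℤ := (M : Matrix (Fin 2) (Fin 2) ℤ) 1 0 with hC
    set D : ℤ := (M : Matrix (Fin 2) (Fin 2) ℤ) 1 1 with hDd
    have hdet : A * D - B * C = 1 := by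
      have := M.property
      rw [Matrix.det_fin_two] at this
      exact this
    have hCne : C ≠ 0 := by
      intro h0
      rw [h0] at hdet
      have : A * D = 1 := by linarith
      rcases Int.mul_eq_one_iff_eq_one_or_neg_one.mp this with ⟨h1, h2⟩ | ⟨h1, h2⟩ <;>
        rw [h1, h2] at htr <;> norm_num at htr
    have hquad : (C : ℝ) * x ^ 2 + ((D - A : ℤ) : ℝ) * x + ((-B : ℤ) : ℝ) = 0 := by
      push_cast
      linear_combination -hfix
    -- discriminant is (A+D)^2 - 4, not a square
    have hdisc : (D - A) ^ 2 - 4 * C * (-B) = (A + D) ^ 2 - 4 := by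
      linear_combination -4 * hdet
    have hns : ¬ IsSquare ((D - A) ^ 2 - 4 * C * (-B)) := by
      rw [hdisc]
      rintro ⟨e, he⟩
      have h3 : 3 ≤ |A + D| := htr
      set T := |A + D| with hT
      set E := |e| with hEdef
      have hE0 : 0 ≤ E := abs_nonneg e
      have h1 : E * E = T * T - 4 := by
        have h5 : T * T = (A + D) * (A + D) := by rw [hT, ← abs_mul, abs_of_nonneg] ; nlinarith [sq_nonneg (A + D)]
        have h6 : E * E = e * e := by rw [hEdef, ← abs_mul, abs_of_nonneg]; nlinarith [sq_nonneg e]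
        rw [h6, h5]; nlinarith [he]
      have hET : E < T := by nlinarith [mul_self_nonneg (E - T)]
      have hE1 : E ≤ T - 1 := by omega
      have : E * E ≤ (T - 1) * (T - 1) := mul_le_mul hE1 hE1 hE0 (by linarith)
      nlinarith
    constructor
    · rintro ⟨q, hq⟩
      rw [← hq] at hquad
      exact hns (isSquare_of_rat_root C (D - A) (-B) hCne q hquad)
    · exact ⟨C, D - A, -B, hCne, hquad⟩
end

section
/- For every real number x, there exists n ∈ ℕ with T^[n] x = 0 if and only if x is rational, where T is the nearest-integer Gauss map. (A real number has a finite nearest-integer continued fraction expansion exactly when it is rational.) -/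
/-- The nearest-integer Gauss map `T x = -1/x - round (-1/x)` (with `T 0 = 0`). -/
noncomputable def nearestIntGauss (x : ℝ) : ℝ :=
  if x = 0 then 0 else -1 / x - round (-1 / x)

/-- Rational step of the map. -/
lemma nearestIntGauss_ratCast (q : ℚ) (hq : q ≠ 0) :
    nearestIntGauss (q : ℝ) = ((-1 / q - round (-1 / q) : ℚ) : ℝ) := by
  have hq' : (q : ℝ) ≠ 0 := by exact_mod_cast hq
  simp only [nearestIntGauss, hq', if_false]
  push_cast
  rw [show ((-1 : ℝ) / q) = (((-1 / q : ℚ) : ℝ)) by push_cast; ring, Rat.round_cast]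

lemma key_descent (q : ℚ) (hq : q ≠ 0) :
    (-1 / q - round (-1 / q) : ℚ).num.natAbs < q.num.natAbs := by
  set y : ℚ := -1 / q - round (-1 / q) with hy
  have hnum : q.num ≠ 0 := Rat.num_ne_zero.2 hq
  have hinv : (-1 / q : ℚ) = -(q⁻¹) := by ring
  have hden_inv : (q⁻¹).den ∣ q.num.natAbs := by
    rw [Rat.inv_def]
    have := Rat.den_dvd (q.den : ℤ) q.num
    exact Int.natCast_dvd_natCast.mp (Int.dvd_natAbs.mpr this)
  have hden_neg : (-1 / q : ℚ).den = (q⁻¹).den := by rw [hinv, Rat.neg_den]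
  have hden_y : y.den ∣ q.num.natAbs := by
    have h1 : y.den ∣ (-1/q : ℚ).den * ((-(round (-1/q : ℚ)) : ℤ) : ℚ).den := by
      have := Rat.add_den_dvd (-1/q : ℚ) ((-(round (-1/q : ℚ)) : ℤ) : ℚ)
      simpa [hy, sub_eq_add_neg] using this
    rw [Rat.den_intCast, mul_one, hden_neg] at h1
    exact h1.trans hden_inv
  have hden_le : y.den ≤ q.num.natAbs :=
    Nat.le_of_dvd (Nat.pos_of_ne_zero (by simpa using hnum)) hden_y
  have habs : |y| ≤ 1/2 := abs_sub_round (-1/q : ℚ)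
  have h2 : 2 * y.num.natAbs ≤ y.den := by
    have h3 : (y.num.natAbs : ℚ) = |y| * y.den := by
      have hyd : (0:ℚ) < (y.den : ℚ) := by exact_mod_cast y.pos
      rw [show |y| = |(y.num : ℚ)| / (y.den : ℚ) by
        rw [← Rat.num_div_den y, abs_div, abs_of_pos hyd, Rat.num_div_den y]]
      rw [div_mul_cancel₀ _ hyd.ne', Nat.cast_natAbs, Int.cast_abs]
    have h4 : (y.num.natAbs : ℚ) ≤ (y.den : ℚ) / 2 := by
      rw [h3]
      have hyd : (0:ℚ) ≤ (y.den : ℚ) := by positivity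
      calc |y| * y.den ≤ (1/2) * y.den := mul_le_mul_of_nonneg_right habs hyd
        _ = (y.den : ℚ) / 2 := by ring
    have : (2 * y.num.natAbs : ℚ) ≤ (y.den : ℚ) := by linarith
    exact_mod_cast this
  have hq1 : 1 ≤ q.num.natAbs := Nat.pos_of_ne_zero (by simpa using hnum)
  omega

lemma rat_terminates_aux : ∀ m : ℕ, ∀ q : ℚ, q.num.natAbs ≤ m →
    ∃ n : ℕ, nearestIntGauss^[n] (q : ℝ) = 0 := by
  intro m
  induction m with
  | zero =>
    intro q h
    have hq : q = 0 := by
      have : q.num = 0 := by omega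
      exact Rat.num_eq_zero.1 this
    exact ⟨0, by simp [hq]⟩
  | succ m ih =>
    intro q h
    by_cases hq : q = 0
    · exact ⟨0, by simp [hq]⟩
    · have hd := key_descent q hq
      obtain ⟨n, hn⟩ := ih (-1 / q - round (-1 / q)) (by omega)
      refine ⟨n + 1, ?_⟩
      rw [Function.iterate_succ_apply, nearestIntGauss_ratCast q hq]
      exact hn

lemma rational_of_iter : ∀ n : ℕ, ∀ x : ℝ, nearestIntGauss^[n] x = 0 →
    ∃ q : ℚ, (q : ℝ) = x := by
  intro n
  induction n with
  | zero =>
    intro x h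
    exact ⟨0, by simpa using h.symm⟩
  | succ n ih =>
    intro x h
    rw [Function.iterate_succ_apply] at h
    obtain ⟨r, hr⟩ := ih _ h
    by_cases hx : x = 0
    · exact ⟨0, by simp [hx]⟩
    · set k : ℤ := round (-1/x : ℝ) with hk
      have hT : nearestIntGauss x = -1/x - k := by simp [nearestIntGauss, hx, hk]
      have hrx : (-1/x : ℝ) = ((r + k : ℚ) : ℝ) := by
        rw [hT] at hr
        push_cast
        linarith
      have hne : ((r + k : ℚ) : ℝ) ≠ 0 := by
        rw [← hrx]
        simp [hx]
      have hne' : (r + k : ℚ) ≠ 0 := by exact_mod_cast hne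
      refine ⟨-1 / (r + k), ?_⟩
      have hs : ((r : ℝ) + (k : ℝ)) ≠ 0 := by push_cast at hne; exact hne
      push_cast at hrx ⊢
      field_simp at hrx ⊢
      linarith
  -- done

/-- A real number has a finite nearest-integer continued fraction expansion
exactly when it is rational. -/
theorem finite_nearest_int_cf_iff_rational (x : ℝ) :
    (∃ n : ℕ, nearestIntGauss^[n] x = 0) ↔ ∃ q : ℚ, (q : ℝ) = x := by
  constructor
  · rintro ⟨n, hn⟩
    exact rational_of_iter n x hn
  · rintro ⟨q, rfl⟩
    exact rat_terminates_aux q.num.natAbs q le_rfl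
end

section
/- For every real number x, x is a quadratic surd — that is, x is irrational and there exist integers a, b, c with a ≠ 0 and a·x² + b·x + c = 0 — if and only if there exist natural numbers m < n with T^[m] x = T^[n] x and T^[m] x ≠ 0, where T is the nearest-integer Gauss map. (Euler–Lagrange theorem for nearest-integer continued fractions: the expansion is infinite and eventually periodic exactly for quadratic surds.) -/
set_option maxHeartbeats 1000000

open Function

lemma nig_zero : nearestIntGauss 0 = 0 := by simp [nearestIntGauss]

lemma nig_def {x : ℝ} (hx : x ≠ 0) :
    nearestIntGauss x = -1 / x - round (-1 / x) := by simp [nearestIntGauss, hx]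

lemma nig_abs (x : ℝ) : |nearestIntGauss x| ≤ 1 / 2 := by
  by_cases hx : x = 0
  · simp [hx, nig_zero]
  · rw [nig_def hx]
    have := abs_sub_round (-1 / x)
    linarith [this]

lemma nig_mul {x : ℝ} (hx : x ≠ 0) :
    nearestIntGauss x * x = -1 - (round (-1 / x) : ℝ) * x := by
  rw [nig_def hx]; field_simp

lemma nig_irrational {x : ℝ} (hx : Irrational x) : Irrational (nearestIntGauss x) := by
  rw [nig_def hx.ne_zero]
  have : -1 / x = -x⁻¹ := by field_simp
  rw [this]
  exact Irrational.sub_intCast (hx.inv.neg) _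

lemma nig_iter_zero (j : ℕ) : nearestIntGauss^[j] 0 = 0 := by
  induction j with
  | zero => rfl
  | succ n ih => rw [Function.iterate_succ_apply', ih, nig_zero]

lemma nig_round_big {z : ℝ} (hz : z ≠ 0) (h : |z| ≤ 1 / 2) :
    2 ≤ |round (-1 / z)| := by
  have h1 : (2 : ℝ) ≤ |(-1) / z| := by
    rw [abs_div]
    rw [le_div_iff₀ (abs_pos.mpr hz)]
    rw [abs_neg, abs_one]
    linarith [abs_pos.mpr hz]
  have h2 := abs_sub_round (-1 / z)
  have h3 : (3 / 2 : ℝ) ≤ |(round (-1 / z) : ℝ)| := by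
    have := abs_sub_abs_le_abs_sub (-1 / z) ((round (-1 / z) : ℝ))
    have hn : (-1 : ℝ) / z = -1 / z := by ring
    rw [hn] at h1
    linarith
  rw [← Int.cast_abs] at h3
  have h5 : (1 : ℤ) < |round (-1 / z)| := by exact_mod_cast lt_of_lt_of_le (by norm_num : (1:ℝ) < 3/2) h3
  omega

/-- One step of the algorithm on a fraction representation. -/
lemma nig_rep_step {x : ℝ} {u v : ℤ} (hx : x = u / v) (hu : u ≠ 0) (hv : v ≠ 0) :
    ∃ w : ℤ, nearestIntGauss x = w / u ∧ 2 * w.natAbs ≤ u.natAbs := by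
  have hur : (u : ℝ) ≠ 0 := Int.cast_ne_zero.mpr hu
  have hvr : (v : ℝ) ≠ 0 := Int.cast_ne_zero.mpr hv
  have hx0 : x ≠ 0 := by rw [hx]; exact div_ne_zero hur hvr
  refine ⟨-v - round (-1 / x) * u, ?_, ?_⟩
  · rw [nig_def hx0, hx]
    push_cast
    field_simp
  · have h1 : |nearestIntGauss x| ≤ 1 / 2 := nig_abs x
    have h2 : nearestIntGauss x = ((-v - round (-1 / x) * u : ℤ) : ℝ) / u := by
      rw [nig_def hx0, hx]; push_cast; field_simp
    rw [h2, abs_div] at h1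
    have h3 : |((-v - round (-1 / x) * u : ℤ) : ℝ)| * 2 ≤ |(u : ℝ)| := by
      rw [div_le_iff₀ (abs_pos.mpr hur)] at h1
      linarith
    rw [← Int.cast_abs, ← Int.cast_abs] at h3
    have h4 : ((2 * |(-v - round (-1 / x) * u)| : ℤ) : ℝ) ≤ ((|u| : ℤ) : ℝ) := by
      push_cast [Int.cast_abs] at h3 ⊢; linarith
    have h5 : 2 * |(-v - round (-1 / x) * u)| ≤ |u| := by exact_mod_cast h4
    rw [Int.abs_eq_natAbs, Int.abs_eq_natAbs] at h5
    omega

lemma nig_terminates_aux : ∀ N : ℕ, ∀ u v : ℤ, ∀ x : ℝ, v ≠ 0 → v.natAbs ≤ N →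
    x = u / v → 2 * u.natAbs ≤ v.natAbs → ∃ j, nearestIntGauss^[j] x = 0 := by
  intro N
  induction N with
  | zero =>
    intro u v x hv hN _ _
    exact absurd (Int.natAbs_eq_zero.mp (by omega)) hv
  | succ N ih =>
    intro u v x hv hN hx hub
    by_cases hu : u = 0
    · exact ⟨0, by simp [hx, hu]⟩
    · obtain ⟨w, hw, hwb⟩ := nig_rep_step hx hu hv
      have hu0 : u.natAbs ≠ 0 := Int.natAbs_ne_zero.mpr hu
      obtain ⟨j, hj⟩ := ih w u (nearestIntGauss x) hu (by omega) hw hwb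
      exact ⟨j + 1, by rw [Function.iterate_succ_apply]; exact hj⟩

lemma nig_rat_terminates (q : ℚ) : ∃ j, nearestIntGauss^[j] ((q : ℝ)) = 0 := by
  by_cases hq : q = 0
  · exact ⟨0, by simp [hq]⟩
  · have hx : (q : ℝ) = (q.num : ℝ) / (q.den : ℤ) := by push_cast [Rat.cast_def]; rfl
    have hnum : q.num ≠ 0 := Rat.num_ne_zero.mpr hq
    have hden : (q.den : ℤ) ≠ 0 := by exact_mod_cast q.den_nz
    obtain ⟨w, hw, hwb⟩ := nig_rep_step hx hnum hden
    obtain ⟨j, hj⟩ := nig_terminates_aux q.num.natAbs w q.num (nearestIntGauss (q : ℝ))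
      hnum le_rfl hw hwb
    exact ⟨j + 1, by rw [Function.iterate_succ_apply]; exact hj⟩

/-- The Möbius-cocycle invariant along an orbit staying in `[-1/2,1/2] \ {0}`. -/
lemma nig_cycle_rel (y : ℝ) (hy : ∀ i, nearestIntGauss^[i] y ≠ 0)
    (hhalf : ∀ i, |nearestIntGauss^[i] y| ≤ 1 / 2) :
    ∀ j, 1 ≤ j → ∃ A B C D : ℤ, |C| < |A| ∧ |D| < |B| ∧
      (nearestIntGauss^[j] y) * ((C : ℝ) * y + D) = (A : ℝ) * y + B ∧
      (C : ℝ) * y + D ≠ 0 := by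
  intro j hj
  induction j, hj using Nat.le_induction with
  | base =>
    have hy0 : y ≠ 0 := hy 0
    set k := round (-1 / y) with hk
    have hk2 : 2 ≤ |k| := nig_round_big hy0 (hhalf 0)
    refine ⟨-k, -1, 1, 0, by simp; omega, by simp, ?_, by simpa using hy0⟩
    have := nig_mul hy0
    push_cast
    simp only [Function.iterate_one]
    rw [← hk] at this
    linarith [this]
  | succ j hj ih =>
    obtain ⟨A, B, C, D, h1, h2, heq, hden⟩ := ih
    set z := nearestIntGauss^[j] y with hzdef
    have hz0 : z ≠ 0 := hy j
    set k := round (-1 / z) with hk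
    have hk2 : 2 ≤ |k| := nig_round_big hz0 (hhalf j)
    have e1 : nearestIntGauss z * z = -1 - (k : ℝ) * z := nig_mul hz0
    refine ⟨-k * A - C, -k * B - D, A, B, ?_, ?_, ?_, ?_⟩
    · have t1 : |k * A| ≤ |k * A + C| + |C| := by
        calc |k * A| = |(k * A + C) + -C| := by ring_nf
        _ ≤ |k * A + C| + |-C| := abs_add_le _ _
        _ = |k * A + C| + |C| := by rw [abs_neg]
      rw [abs_mul] at t1
      have : |-k * A - C| = |k * A + C| := by
        rw [show -k * A - C = -(k * A + C) by ring, abs_neg]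
      rw [this]
      nlinarith [abs_nonneg A, abs_nonneg C]
    · have t1 : |k * B| ≤ |k * B + D| + |D| := by
        calc |k * B| = |(k * B + D) + -D| := by ring_nf
        _ ≤ |k * B + D| + |-D| := abs_add_le _ _
        _ = |k * B + D| + |D| := by rw [abs_neg]
      rw [abs_mul] at t1
      have : |-k * B - D| = |k * B + D| := by
        rw [show -k * B - D = -(k * B + D) by ring, abs_neg]
      rw [this]
      nlinarith [abs_nonneg B, abs_nonneg D]
    · rw [Function.iterate_succ_apply', ← hzdef]
      push_cast
      calc nearestIntGauss z * ((A : ℝ) * y + B)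
          = (nearestIntGauss z * z) * ((C : ℝ) * y + D) := by rw [← heq]; ring
        _ = (-1 - (k : ℝ) * z) * ((C : ℝ) * y + D) := by rw [e1]
        _ = -((C : ℝ) * y + D) - (k : ℝ) * (z * ((C : ℝ) * y + D)) := by ring
        _ = -((C : ℝ) * y + D) - (k : ℝ) * ((A : ℝ) * y + B) := by rw [heq]
        _ = (-(k : ℝ) * A - C) * y + (-(k : ℝ) * B - D) := by ring
    · rw [← heq]
      exact mul_ne_zero hz0 hden

lemma nig_cycle_quad {y : ℝ} {p : ℕ} (hp : 1 ≤ p) (hcyc : nearestIntGauss^[p] y = y)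
    (hy : ∀ i, nearestIntGauss^[i] y ≠ 0)
    (hhalf : ∀ i, |nearestIntGauss^[i] y| ≤ 1 / 2) :
    ∃ a b c : ℤ, ¬(a = 0 ∧ b = 0 ∧ c = 0) ∧
      (a : ℝ) * y ^ 2 + (b : ℝ) * y + (c : ℝ) = 0 := by
  obtain ⟨A, B, C, D, h1, h2, heq, hden⟩ := nig_cycle_rel y hy hhalf p hp
  rw [hcyc] at heq
  refine ⟨C, D - A, -B, ?_, ?_⟩
  · rintro ⟨-, -, hB⟩
    have hB0 : B = 0 := by omega
    rw [hB0] at h2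
    simp at h2
    exact absurd h2 (abs_nonneg D).not_gt
  · push_cast
    linear_combination heq

/-- Transport a nontrivial integer quadratic relation backwards through one step. -/
lemma nig_quad_step {x : ℝ} (hx : x ≠ 0) {c e f : ℤ}
    (h0 : ¬(c = 0 ∧ e = 0 ∧ f = 0))
    (h : (c : ℝ) * (nearestIntGauss x) ^ 2 + (e : ℝ) * (nearestIntGauss x) + (f : ℝ) = 0) :
    ∃ a b c' : ℤ, ¬(a = 0 ∧ b = 0 ∧ c' = 0) ∧
      (a : ℝ) * x ^ 2 + (b : ℝ) * x + (c' : ℝ) = 0 := by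
  set k := round (-1 / x) with hk
  have e1 : nearestIntGauss x * x = -1 - (k : ℝ) * x := nig_mul hx
  refine ⟨c * k ^ 2 - e * k + f, 2 * c * k - e, c, ?_, ?_⟩
  · rintro ⟨ha, hb, hc⟩
    have he0 : e = 0 := by rw [hc] at hb; ring_nf at hb; omega
    have hf0 : f = 0 := by rw [hc, he0] at ha; ring_nf at ha; omega
    exact h0 ⟨hc, he0, hf0⟩
  · push_cast
    linear_combination x ^ 2 * h +
      (-((c : ℝ) * (nearestIntGauss x * x + (-1 - (k : ℝ) * x)) + (e : ℝ) * x)) * e1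

/-- If `w ≠ 0` is a root of an integer quadratic and `z = -1/w - k`, then `z` is a root of
the transformed quadratic. -/
lemma nig_quad_next {A B C k : ℤ} {w z : ℝ} (hw : w ≠ 0)
    (hz : z * w = -1 - (k : ℝ) * w)
    (h : (A : ℝ) * w ^ 2 + (B : ℝ) * w + (C : ℝ) = 0) :
    (C : ℝ) * z ^ 2 + (2 * (C : ℝ) * k - B) * z + ((A : ℝ) - B * k + C * k ^ 2) = 0 := by
  have h2 : ((C : ℝ) * z ^ 2 + (2 * (C : ℝ) * k - B) * z + ((A : ℝ) - B * k + C * k ^ 2))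
      * w ^ 2 = 0 := by
    linear_combination h + ((C : ℝ) * (z * w) + (2 * (C : ℝ) * k - B) * w
      - (C : ℝ) * (1 + (k : ℝ) * w)) * hz
  rcases mul_eq_zero.mp h2 with h3 | h3
  · exact h3
  · exact absurd (pow_eq_zero_iff (by norm_num) |>.mp h3) hw

noncomputable def niK (x : ℝ) (n : ℕ) : ℤ := round (-1 / nearestIntGauss^[n] x)

noncomputable def niABC (a b c : ℤ) (x : ℝ) : ℕ → ℤ × ℤ × ℤ
  | 0 => (a, b, c)
  | n + 1 =>
    ((niABC a b c x n).2.2,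
     2 * (niABC a b c x n).2.2 * niK x n - (niABC a b c x n).2.1,
     (niABC a b c x n).1 - (niABC a b c x n).2.1 * niK x n
       + (niABC a b c x n).2.2 * niK x n ^ 2)

lemma int_abs_le_of_sq_le {z M : ℤ} (h : z ^ 2 ≤ M) : |z| ≤ M := by
  rcases eq_or_ne z 0 with rfl | hz
  · simpa using (by nlinarith : (0 : ℤ) ≤ M)
  · have h1 : 1 ≤ |z| := Int.one_le_abs (by omega)
    nlinarith [sq_abs z]

lemma nig_forward {x : ℝ} (hirr : Irrational x) {a b c : ℤ} (ha : a ≠ 0)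
    (hq : (a : ℝ) * x ^ 2 + (b : ℝ) * x + (c : ℝ) = 0) :
    ∃ m n : ℕ, m < n ∧ nearestIntGauss^[m] x = nearestIntGauss^[n] x ∧
      nearestIntGauss^[m] x ≠ 0 := by
  classical
  set Y : ℕ → ℝ := fun n => nearestIntGauss^[n] x with hYdef
  set K : ℕ → ℤ := niK x with hKdef
  set A : ℕ → ℤ := fun n => (niABC a b c x n).1 with hAdef
  set B : ℕ → ℤ := fun n => (niABC a b c x n).2.1 with hBdef
  set C : ℕ → ℤ := fun n => (niABC a b c x n).2.2 with hCdef
  have hY0 : Y 0 = x := rfl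
  have hYrec : ∀ n, Y (n + 1) = nearestIntGauss (Y n) := fun n =>
    Function.iterate_succ_apply' _ _ _
  have hYirr : ∀ n, Irrational (Y n) := by
    intro n
    induction n with
    | zero => exact hirr
    | succ n ih => rw [hYrec]; exact nig_irrational ih
  have hYnz : ∀ n, Y n ≠ 0 := fun n => (hYirr n).ne_zero
  have hYhalf : ∀ n, |Y (n + 1)| ≤ 1 / 2 := by
    intro n; rw [hYrec]; exact nig_abs _
  have hKval : ∀ n, K n = round (-1 / Y n) := fun n => rfl
  have hmulrec : ∀ n, Y (n + 1) * Y n = -1 - (K n : ℝ) * Y n := by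
    intro n; rw [hYrec, hKval]; exact nig_mul (hYnz n)
  have hK2 : ∀ n, 1 ≤ n → 2 ≤ |K n| := by
    intro n hn
    obtain ⟨j, rfl⟩ : ∃ j, n = j + 1 := ⟨n - 1, by omega⟩
    rw [hKval]
    exact nig_round_big (hYnz (j + 1)) (hYhalf j)
  have hstepA : ∀ n, A (n + 1) = C n := fun n => rfl
  have hstepB : ∀ n, B (n + 1) = 2 * C n * K n - B n := fun n => rfl
  have hstepC : ∀ n, C (n + 1) = A n - B n * K n + C n * K n ^ 2 := fun n => rfl
  have hA0 : A 0 = a := rfl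
  have hB0 : B 0 = b := rfl
  have hC0 : C 0 = c := rfl
  have hYiter : ∀ n, Y n = nearestIntGauss^[n] x := fun _ => rfl
  clear_value Y K A B C
  -- every iterate is a root of the corresponding quadratic
  have hroot : ∀ n, (A n : ℝ) * (Y n) ^ 2 + (B n : ℝ) * Y n + (C n : ℝ) = 0 := by
    intro n
    induction n with
    | zero => rw [hA0, hB0, hC0, hY0]; exact hq
    | succ n ih =>
      rw [hstepA, hstepB, hstepC]
      push_cast
      have := nig_quad_next (hYnz n) (hmulrec n) ih
      push_cast at this
      linear_combination this
  have hAnz : ∀ n, A n ≠ 0 := by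
    intro n
    induction n with
    | zero => rw [hA0]; exact ha
    | succ n ih =>
      rw [hstepA]
      intro hC
      have h1 : (A n : ℝ) * (Y n) ^ 2 + (B n : ℝ) * Y n = 0 := by
        have := hroot n
        rw [hC] at this
        push_cast at this
        linarith
      have h2 : Y n * ((A n : ℝ) * Y n + B n) = 0 := by linear_combination h1
      have h3 : (A n : ℝ) * Y n + B n = 0 := by
        rcases mul_eq_zero.mp h2 with h | h
        · exact absurd h (hYnz n)
        · exact h
      have hAr : (A n : ℝ) ≠ 0 := Int.cast_ne_zero.mpr ih
      have h4 : Y n = ((-B n : ℤ) : ℝ) / ((A n : ℤ) : ℝ) := by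
        push_cast
        field_simp
        linarith
      exact (irrational_iff_ne_rational _).mp (hYirr n) (-B n) (A n) ih h4
  have hAr : ∀ n, (A n : ℝ) ≠ 0 := fun n => Int.cast_ne_zero.mpr (hAnz n)
  -- constant discriminant
  have hdisc : ∀ n, (B n) ^ 2 - 4 * A n * C n = b ^ 2 - 4 * a * b * 0 + (b^2 - b^2) + (b ^ 2 - 4 * a * c - b^2) + b^2 - b^2 := by
    intro n
    induction n with
    | zero => rw [hA0, hB0, hC0]; ring
    | succ n ih =>
      rw [hstepA, hstepB, hstepC]
      linear_combination ih
  have hdisc' : ∀ n, (B n) ^ 2 - 4 * A n * C n = b ^ 2 - 4 * a * c := by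
    intro n; have := hdisc n; linarith [this]
  have hsq : ∀ n, (2 * (A n : ℝ) * Y n + B n) ^ 2 = ((b ^ 2 - 4 * a * c : ℤ) : ℝ) := by
    intro n
    have hd : ((B n : ℝ)) ^ 2 - 4 * (A n : ℝ) * (C n : ℝ) = ((b ^ 2 - 4 * a * c : ℤ) : ℝ) := by
      exact_mod_cast congrArg (fun z : ℤ => (z : ℝ)) (hdisc' n)
    linear_combination (4 * (A n : ℝ)) * hroot n + hd
  -- positive discriminant
  have hDpos : 0 < b ^ 2 - 4 * a * c := by
    have h1 := hsq 0
    rw [hA0, hB0, hY0] at h1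
    have hge : (0 : ℝ) ≤ ((b ^ 2 - 4 * a * c : ℤ) : ℝ) := h1 ▸ sq_nonneg _
    have hge' : 0 ≤ b ^ 2 - 4 * a * c := by exact_mod_cast hge
    rcases lt_or_eq_of_le hge' with h | h
    · exact h
    · exfalso
      have h2 : (2 * (a : ℝ) * x + b) ^ 2 = 0 := by rw [h1, ← h]; norm_num
      have h3 : 2 * (a : ℝ) * x + b = 0 := by
        exact pow_eq_zero_iff (by norm_num) |>.mp h2
      have h4 : x = ((-b : ℤ) : ℝ) / ((2 * a : ℤ) : ℝ) := by
        have : ((2 * a : ℤ) : ℝ) ≠ 0 := Int.cast_ne_zero.mpr (by omega)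
        field_simp
        push_cast
        linarith
      exact (irrational_iff_ne_rational _).mp hirr (-b) (2 * a) (by omega) h4
  have hDr : (0 : ℝ) < ((b ^ 2 - 4 * a * c : ℤ) : ℝ) := by exact_mod_cast hDpos
  -- the conjugate root
  set W : ℕ → ℝ := fun n => -(B n : ℝ) / (A n : ℝ) - Y n with hWdef
  have hAW : ∀ n, (A n : ℝ) * W n = -(B n : ℝ) - (A n : ℝ) * Y n := by
    intro n
    show (A n : ℝ) * (-(B n : ℝ) / (A n : ℝ) - Y n) = _
    field_simp [hAr n]
  clear_value W
  have hconj : ∀ n, (A n : ℝ) * (W n) ^ 2 + (B n : ℝ) * W n + (C n : ℝ) = 0 := by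
    intro n
    linear_combination hroot n + (W n - Y n) * hAW n
  have hprod : ∀ n, (C n : ℝ) = (A n : ℝ) * Y n * W n := by
    intro n
    linear_combination hroot n + (-(Y n)) * hAW n
  have hWnz : ∀ n, W n ≠ 0 := by
    intro n hW
    have h1 : (C n : ℝ) = 0 := by rw [hprod n, hW, mul_zero]
    have h2 : C n = 0 := by exact_mod_cast h1
    exact hAnz (n + 1) (by rw [hstepA]; exact h2)
  have hYneW : ∀ n, Y n - W n ≠ 0 := by
    intro n h
    have h1 : (2 * (A n : ℝ) * Y n + B n) = (A n : ℝ) * (Y n - W n) := by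
      linear_combination hAW n
    have h2 := hsq n
    rw [h1, h, mul_zero] at h2
    rw [← h2] at hDr
    norm_num at hDr
  -- conjugate satisfies the same recursion
  have hconjrec : ∀ n, W (n + 1) * W n = -1 - (K n : ℝ) * W n := by
    intro n
    set z : ℝ := (-1 - (K n : ℝ) * W n) / W n with hzdef
    have hz : z * W n = -1 - (K n : ℝ) * W n := div_mul_cancel₀ _ (hWnz n)
    have hzroot := nig_quad_next (hWnz n) hz (hconj n)
    have hzroot' : (A (n+1) : ℝ) * z ^ 2 + (B (n+1) : ℝ) * z + (C (n+1) : ℝ) = 0 := by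
      rw [hstepA, hstepB, hstepC]
      push_cast
      push_cast at hzroot
      linear_combination hzroot
    have hfac : (A (n+1) : ℝ) * ((z - Y (n+1)) * (z - W (n+1))) = 0 := by
      linear_combination hzroot' + (-z) * hAW (n+1) - hprod (n+1)
    have hfac2 : (z - Y (n+1)) * (z - W (n+1)) = 0 := by
      rcases mul_eq_zero.mp hfac with h | h
      · exact absurd h (hAr (n+1))
      · exact h
    rcases mul_eq_zero.mp hfac2 with h | h
    · exfalso
      have hzY : z = Y (n + 1) := by linarith [sub_eq_zero.mp h]
      have h1 : Y (n + 1) * W n = -1 - (K n : ℝ) * W n := by rw [← hzY]; exact hz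
      have h2 := hmulrec n
      have h3 : (W n - Y n) * (Y (n + 1) + (K n : ℝ)) = 0 := by
        linear_combination h1 - h2
      rcases mul_eq_zero.mp h3 with h4 | h4
      · have : Y n - W n = 0 := by linarith
        exact hYneW n this
      · have h5 : (Y (n + 1) + (K n : ℝ)) * Y n = -1 := by
          linear_combination h2
        rw [h4, zero_mul] at h5
        norm_num at h5
    · have hzW : z = W (n + 1) := by linarith [sub_eq_zero.mp h]
      rw [← hzW]; exact hz
  -- difference recursion
  have hdrec : ∀ n, (Y (n + 1) - W (n + 1)) * (Y n * W n) = Y n - W n := by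
    intro n
    linear_combination (W n) * hmulrec n - (Y n) * hconjrec n
  have hdsq : ∀ n, ((A n : ℝ) * (Y n - W n)) ^ 2 = ((b ^ 2 - 4 * a * c : ℤ) : ℝ) := by
    intro n
    have h1 : (A n : ℝ) * (Y n - W n) = 2 * (A n : ℝ) * Y n + B n := by
      linear_combination -(hAW n)
    rw [h1]; exact hsq n
  -- there is an index where the conjugate is large
  have hNex : ∃ N, 1 ≤ N ∧ 1 ≤ |W N| := by
    by_contra hcon
    push_neg at hcon
    have hgrow : ∀ n, 1 ≤ n → 2 * |Y n - W n| ≤ |Y (n + 1) - W (n + 1)| := by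
      intro n hn
      obtain ⟨j, rfl⟩ : ∃ j, n = j + 1 := ⟨n - 1, by omega⟩
      have h1 := congrArg abs (hdrec (j + 1))
      rw [abs_mul, abs_mul] at h1
      have h2 : |Y (j + 1)| ≤ 1 / 2 := hYhalf j
      have h3 : |W (j + 1)| < 1 := hcon (j + 1) (by omega)
      have h4 : (0:ℝ) ≤ |Y (j + 1 + 1) - W (j + 1 + 1)| := abs_nonneg _
      have h5 : (0:ℝ) ≤ |Y (j + 1)| := abs_nonneg _
      have h6 : (0:ℝ) ≤ |W (j + 1)| := abs_nonneg _
      have h7 : |Y (j + 1)| * |W (j + 1)| ≤ 1 / 2 := by nlinarith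
      nlinarith [h1, h7, h4]
    have hpow : ∀ j, 2 ^ j * |Y 1 - W 1| ≤ |Y (1 + j) - W (1 + j)| := by
      intro j
      induction j with
      | zero => simp
      | succ j ih =>
        have := hgrow (1 + j) (by omega)
        have h2 : (0:ℝ) < 2 ^ j := by positivity
        calc 2 ^ (j + 1) * |Y 1 - W 1| = 2 * (2 ^ j * |Y 1 - W 1|) := by ring
          _ ≤ 2 * |Y (1 + j) - W (1 + j)| := by nlinarith [abs_nonneg (Y 1 - W 1)]
          _ ≤ |Y (1 + j + 1) - W (1 + j + 1)| := hgrow (1 + j) (by omega)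
          _ = |Y (1 + (j + 1)) - W (1 + (j + 1))| := by ring_nf
    have hbd : ∀ j, |Y (1 + j) - W (1 + j)| ≤ 3 / 2 := by
      intro j
      have h1 : |Y (1 + j) - W (1 + j)| ≤ |Y (1 + j)| + |W (1 + j)| := abs_sub _ _
      have h2 : |Y (1 + j)| ≤ 1 / 2 := by
        have : 1 + j = j + 1 := by ring
        rw [this]; exact hYhalf j
      have h3 : |W (1 + j)| < 1 := hcon (1 + j) (by omega)
      linarith
    have h0 : 0 < |Y 1 - W 1| := abs_pos.mpr (hYneW 1)
    obtain ⟨j, hj⟩ := pow_unbounded_of_one_lt ((3 / 2) / |Y 1 - W 1|) (one_lt_two (α := ℝ))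
    have h1 : (3 / 2 : ℝ) < 2 ^ j * |Y 1 - W 1| := by
      rw [div_lt_iff₀ h0] at hj
      linarith
    linarith [hpow j, hbd j]
  obtain ⟨N, hN1, hNW⟩ := hNex
  -- the conjugate stays large
  have hWbig : ∀ n, N ≤ n → 1 ≤ |W n| := by
    intro n hn
    induction n, hn using Nat.le_induction with
    | base => exact hNW
    | succ n hn ih =>
      have e := congrArg abs (hconjrec n)
      rw [abs_mul] at e
      have t0 : (-1 : ℝ) - (K n : ℝ) * W n = -((K n : ℝ) * W n + 1) := by ring
      rw [t0, abs_neg] at e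
      have t1 : |(K n : ℝ) * W n| - |(-1 : ℝ)| ≤ |(K n : ℝ) * W n - (-1)| :=
        abs_sub_abs_le_abs_sub _ _
      have t2 : (K n : ℝ) * W n - (-1) = (K n : ℝ) * W n + 1 := by ring
      rw [t2, abs_neg, abs_one] at t1
      have t3 : (2 : ℝ) ≤ |(K n : ℝ)| := by
        rw [← Int.cast_abs]
        exact_mod_cast hK2 n (by omega)
      rw [abs_mul] at t1
      have t4 : 2 * |W n| ≤ |(K n : ℝ)| * |W n| := by
        nlinarith [abs_nonneg (W n)]
      nlinarith [e, t1, t4, ih, abs_nonneg (W (n + 1)), abs_nonneg (W n)]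
  -- bounded coefficients
  have hAbd : ∀ n, N ≤ n → (A n) ^ 2 ≤ 4 * (b ^ 2 - 4 * a * c) := by
    intro n hn
    obtain ⟨j, rfl⟩ : ∃ j, n = j + 1 := ⟨n - 1, by omega⟩
    have h1 : (1 : ℝ) / 2 ≤ |Y (j + 1) - W (j + 1)| := by
      have h2 := abs_sub_abs_le_abs_sub (W (j + 1)) (Y (j + 1))
      have h2' : |W (j + 1) - Y (j + 1)| = |Y (j + 1) - W (j + 1)| := abs_sub_comm _ _
      have h3 := hWbig (j + 1) hn
      have h4 := hYhalf j
      linarith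
    have h5 := hdsq (j + 1)
    have h7 : (1 / 2 : ℝ) * (1 / 2) ≤ |Y (j + 1) - W (j + 1)| * |Y (j + 1) - W (j + 1)| :=
      mul_self_le_mul_self (by norm_num) h1
    have h8 : (1 / 4 : ℝ) ≤ (Y (j + 1) - W (j + 1)) ^ 2 := by
      calc (1 / 4 : ℝ) = (1 / 2) * (1 / 2) := by norm_num
        _ ≤ |Y (j + 1) - W (j + 1)| * |Y (j + 1) - W (j + 1)| := h7
        _ = (Y (j + 1) - W (j + 1)) * (Y (j + 1) - W (j + 1)) := abs_mul_abs_self _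
        _ = (Y (j + 1) - W (j + 1)) ^ 2 := (pow_two _).symm
    have h9 : ((A (j + 1) : ℝ)) ^ 2 * (1 / 4) ≤ ((A (j + 1) : ℝ)) ^ 2 * (Y (j + 1) - W (j + 1)) ^ 2 :=
      mul_le_mul_of_nonneg_left h8 (sq_nonneg _)
    have h10 : ((A (j + 1) : ℝ)) ^ 2 * (Y (j + 1) - W (j + 1)) ^ 2 = ((b ^ 2 - 4 * a * c : ℤ) : ℝ) := by
      linear_combination h5
    have h6 : ((A (j + 1) : ℝ)) ^ 2 ≤ 4 * ((b ^ 2 - 4 * a * c : ℤ) : ℝ) := by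
      linarith [h9, h10]
    exact_mod_cast h6
  have hCbd : ∀ n, N ≤ n → (C n) ^ 2 ≤ 4 * (b ^ 2 - 4 * a * c) := by
    intro n hn
    rw [← hstepA]
    exact hAbd (n + 1) (by omega)
  have hBbd : ∀ n, N ≤ n → (B n) ^ 2 ≤ 17 * (b ^ 2 - 4 * a * c) := by
    intro n hn
    have h1 := hdisc' n
    nlinarith [sq_nonneg (A n - C n), sq_nonneg (A n + C n), hAbd n hn, hCbd n hn]
  -- pigeonhole
  set KK : ℤ := 17 * (b ^ 2 - 4 * a * c) with hKKdef
  have habs : ∀ n, N ≤ n → |A n| ≤ KK ∧ |B n| ≤ KK ∧ |C n| ≤ KK := by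
    intro n hn
    refine ⟨int_abs_le_of_sq_le ?_, int_abs_le_of_sq_le (hBbd n hn), int_abs_le_of_sq_le ?_⟩
    · nlinarith [hAbd n hn]
    · nlinarith [hCbd n hn]
  have hmap : Set.MapsTo (fun j : ℕ =>
    (A (N + j), B (N + j), C (N + j),
      decide (0 ≤ 2 * (A (N + j) : ℝ) * Y (N + j) + (B (N + j) : ℝ)))) Set.univ
      (Set.Icc (-KK) KK ×ˢ Set.Icc (-KK) KK ×ˢ Set.Icc (-KK) KK ×ˢ (Set.univ : Set Bool)) := by
    intro j _
    obtain ⟨h1, h2, h3⟩ := habs (N + j) (by omega)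
    refine ⟨abs_le.mp h1, abs_le.mp h2, abs_le.mp h3, trivial⟩
  have hfin : (Set.Icc (-KK) KK ×ˢ Set.Icc (-KK) KK ×ˢ Set.Icc (-KK) KK
      ×ˢ (Set.univ : Set Bool)).Finite :=
    (Set.finite_Icc _ _).prod ((Set.finite_Icc _ _).prod
      ((Set.finite_Icc _ _).prod (Set.finite_univ)))
  obtain ⟨i, -, j, -, hij, hfe⟩ :=
    Set.infinite_univ.exists_ne_map_eq_of_mapsTo hmap hfin
  -- same data forces same value
  have hsame : ∀ i j : ℕ, A i = A j → B i = B j →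
      (decide (0 ≤ 2 * (A i : ℝ) * Y i + (B i : ℝ))
        = decide (0 ≤ 2 * (A j : ℝ) * Y j + (B j : ℝ))) → Y i = Y j := by
    intro i j h1 h2 h3
    have hu := hsq i
    have hv := hsq j
    have huv : ((2 * (A i : ℝ) * Y i + B i) - (2 * (A j : ℝ) * Y j + B j))
        * ((2 * (A i : ℝ) * Y i + B i) + (2 * (A j : ℝ) * Y j + B j)) = 0 := by
      linear_combination hu - hv
    have hune : (2 * (A i : ℝ) * Y i + B i) ≠ 0 := by
      intro h
      rw [h] at hu
      rw [← hu] at hDr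
      norm_num at hDr
    have hvne : (2 * (A j : ℝ) * Y j + B j) ≠ 0 := by
      intro h
      rw [h] at hv
      rw [← hv] at hDr
      norm_num at hDr
    have hs := decide_eq_decide.mp h3
    rcases mul_eq_zero.mp huv with h | h
    · have h4 : 2 * (A i : ℝ) * Y i + B i = 2 * (A j : ℝ) * Y j + B j := by linarith
      rw [← h1, ← h2] at h4
      have h5 : 2 * (A i : ℝ) * (Y i - Y j) = 0 := by linear_combination h4
      have h6 : (2 * (A i : ℝ)) ≠ 0 := by
        simp only [ne_eq, mul_eq_zero]
        push_neg
        exact ⟨by norm_num, hAr i⟩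
      rcases mul_eq_zero.mp h5 with h7 | h7
      · exact absurd h7 h6
      · linarith [h7]
    · exfalso
      have h4 : 2 * (A i : ℝ) * Y i + B i = -(2 * (A j : ℝ) * Y j + B j) := by linarith
      rcases le_or_gt 0 (2 * (A i : ℝ) * Y i + B i) with h5 | h5
      · have h6 := hs.mp h5
        have : 2 * (A i : ℝ) * Y i + B i > 0 := lt_of_le_of_ne h5 (Ne.symm hune)
        linarith
      · have h6 : ¬(0 ≤ 2 * (A j : ℝ) * Y j + B j) := fun hh => absurd (hs.mpr hh) (not_le.mpr h5)
        push_neg at h6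
        linarith
  -- extract the components of hfe
  simp only [Prod.mk.injEq] at hfe
  obtain ⟨hEA, hEB, hEC, hES⟩ := hfe
  have hYeq : Y (N + i) = Y (N + j) := hsame (N + i) (N + j) hEA hEB hES
  rw [hYiter, hYiter] at hYeq
  have hYnz' : nearestIntGauss^[N + i] x ≠ 0 := by rw [← hYiter]; exact hYnz (N + i)
  have hYnz'' : nearestIntGauss^[N + j] x ≠ 0 := by rw [← hYiter]; exact hYnz (N + j)
  rcases hij.lt_or_gt with h | h
  · exact ⟨N + i, N + j, by omega, hYeq, hYnz'⟩
  · exact ⟨N + j, N + i, by omega, hYeq.symm, hYnz''⟩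

lemma nig_transport : ∀ m : ℕ, ∀ x : ℝ, (∀ i, i < m → nearestIntGauss^[i] x ≠ 0) →
    (∃ a b c : ℤ, ¬(a = 0 ∧ b = 0 ∧ c = 0) ∧
      (a : ℝ) * (nearestIntGauss^[m] x) ^ 2 + (b : ℝ) * (nearestIntGauss^[m] x) + (c : ℝ) = 0) →
    ∃ a b c : ℤ, ¬(a = 0 ∧ b = 0 ∧ c = 0) ∧
      (a : ℝ) * x ^ 2 + (b : ℝ) * x + (c : ℝ) = 0 := by
  intro m
  induction m with
  | zero => intro x _ h; simpa using h
  | succ m ih =>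
    intro x hnz h
    have hx0 : x ≠ 0 := by simpa using hnz 0 (Nat.succ_pos m)
    have h' : ∃ a b c : ℤ, ¬(a = 0 ∧ b = 0 ∧ c = 0) ∧
        (a : ℝ) * (nearestIntGauss x) ^ 2 + (b : ℝ) * (nearestIntGauss x) + (c : ℝ) = 0 := by
      apply ih (nearestIntGauss x)
      · intro i hi
        rw [← Function.iterate_succ_apply]
        exact hnz (i + 1) (by omega)
      · obtain ⟨a, b, c, h0, heq⟩ := h
        exact ⟨a, b, c, h0, by rw [← Function.iterate_succ_apply]; exact heq⟩
    obtain ⟨a, b, c, h0, heq⟩ := h'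
    exact nig_quad_step hx0 h0 heq

lemma nig_lead_ne_zero {x : ℝ} (hx : Irrational x) {a b c : ℤ}
    (h0 : ¬(a = 0 ∧ b = 0 ∧ c = 0))
    (h : (a : ℝ) * x ^ 2 + (b : ℝ) * x + (c : ℝ) = 0) : a ≠ 0 := by
  intro ha
  rw [ha] at h
  push_cast at h
  by_cases hb : b = 0
  · rw [hb] at h
    push_cast at h
    have hc : c = 0 := by exact_mod_cast (by linarith : ((c : ℤ) : ℝ) = 0)
    exact h0 ⟨ha, hb, hc⟩
  · have hbr : (b : ℝ) ≠ 0 := Int.cast_ne_zero.mpr hb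
    have : x = ((-c : ℤ) : ℝ) / ((b : ℤ) : ℝ) := by
      push_cast
      field_simp
      linarith
    exact (irrational_iff_ne_rational x).mp hx (-c) b hb this

/-- Eventually periodic with a nonzero value implies no iterate is zero. -/
lemma nig_never_zero {x : ℝ} {m n : ℕ} (hmn : m < n)
    (hper : nearestIntGauss^[m] x = nearestIntGauss^[n] x)
    (hne : nearestIntGauss^[m] x ≠ 0) : ∀ i, nearestIntGauss^[i] x ≠ 0 := by
  set p := n - m with hp
  have hp1 : 1 ≤ p := by omega
  have hKp : ∀ K : ℕ, nearestIntGauss^[m + K * p] x = nearestIntGauss^[m] x := by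
    intro K
    induction K with
    | zero => simp
    | succ K ihK =>
      have : m + (K + 1) * p = p + (m + K * p) := by ring
      rw [this, Function.iterate_add_apply, ihK, ← Function.iterate_add_apply]
      have : p + m = n := by omega
      rw [this, ← hper]
  intro i hi
  have hzero : nearestIntGauss^[m + i * p] x = 0 := by
    have : m + i * p = (m + i * p - i) + i := by
      have : i ≤ m + i * p := by nlinarith [hp1]
      omega
    rw [this, Function.iterate_add_apply, hi, nig_iter_zero]
  rw [hKp i] at hzero
  exact hne hzero

lemma nig_reverse {x : ℝ} {m n : ℕ} (hmn : m < n)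
    (hper : nearestIntGauss^[m] x = nearestIntGauss^[n] x)
    (hne : nearestIntGauss^[m] x ≠ 0) :
    Irrational x ∧ ∃ a b c : ℤ, a ≠ 0 ∧
      (a : ℝ) * x ^ 2 + (b : ℝ) * x + (c : ℝ) = 0 := by
  have hnz := nig_never_zero hmn hper hne
  have hirr : Irrational x := by
    by_contra hx
    rw [Irrational] at hx
    push_neg at hx
    obtain ⟨q, hq⟩ := hx
    obtain ⟨j, hj⟩ := nig_rat_terminates q
    rw [hq] at hj
    exact hnz j hj
  -- the periodic point y = T^[m] x
  set y := nearestIntGauss^[m] x with hy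
  set p := n - m with hpdef
  have hp1 : 1 ≤ p := by omega
  have hcyc : nearestIntGauss^[p] y = y := by
    rw [hy, ← Function.iterate_add_apply]
    have : p + m = n := by omega
    rw [this, ← hper]
  have hynz : ∀ i, nearestIntGauss^[i] y ≠ 0 := by
    intro i
    rw [hy, ← Function.iterate_add_apply]
    exact hnz (i + m)
  have habs : ∀ z : ℝ, ∀ i, 1 ≤ i → |nearestIntGauss^[i] z| ≤ 1 / 2 := by
    intro z i hi
    obtain ⟨i, rfl⟩ : ∃ j, i = j + 1 := ⟨i - 1, by omega⟩
    rw [Function.iterate_succ_apply']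
    exact nig_abs _
  have hyhalf : ∀ i, |nearestIntGauss^[i] y| ≤ 1 / 2 := by
    intro i
    rcases Nat.eq_zero_or_pos i with hi | hi
    · rw [hi]
      simp only [Function.iterate_zero, id_eq]
      rw [hper]
      exact habs x n (by omega)
    · exact habs y i hi
  obtain ⟨a, b, c, h0, heq⟩ := nig_cycle_quad hp1 hcyc hynz hyhalf
  have hxi : ∀ i, i < m → nearestIntGauss^[i] x ≠ 0 := fun i _ => hnz i
  obtain ⟨a', b', c', h0', heq'⟩ := nig_transport m x hxi ⟨a, b, c, h0, heq⟩
  exact ⟨hirr, a', b', c', nig_lead_ne_zero hirr h0' heq', heq'⟩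


/-- Euler–Lagrange theorem for nearest-integer continued fractions: the expansion
is infinite and eventually periodic exactly for quadratic surds. -/
theorem eventually_periodic_iff_quadratic_surd (x : ℝ) :
    (Irrational x ∧ ∃ a b c : ℤ, a ≠ 0 ∧ (a : ℝ) * x ^ 2 + (b : ℝ) * x + (c : ℝ) = 0) ↔
      ∃ m n : ℕ, m < n ∧ nearestIntGauss^[m] x = nearestIntGauss^[n] x ∧
        nearestIntGauss^[m] x ≠ 0 := by
  constructor
  · rintro ⟨hirr, a, b, c, ha, heq⟩
    exact nig_forward hirr ha heq
  · rintro ⟨m, n, hmn, hper, hne⟩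
    exact nig_reverse hmn hper hne
end

section
/- For every complex number z, there exists n ∈ ℕ with T^[n] z = 0 if and only if z = p/q for some Gaussian integers p, q ∈ ℤ[i] with q ≠ 0, where T is the Hurwitz complex Gauss map. (A complex number has a finite Hurwitz continued fraction expansion exactly when it is a ratio of Gaussian integers.) -/
/-- Rounding a complex number to a nearest Gaussian integer (as a complex number). -/
noncomputable def gaussRound (w : ℂ) : ℂ :=
  (round w.re : ℤ) + (round w.im : ℤ) * Complex.I

/-- The Hurwitz complex Gauss map `T z = 1/z - ⟦1/z⟧` (with `T 0 = 0`). -/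
noncomputable def hurwitzGauss (z : ℂ) : ℂ :=
  if z = 0 then 0 else 1 / z - gaussRound (1 / z)

open GaussianInt in
lemma gaussRound_div (q p : GaussianInt) :
    gaussRound ((toComplex q) / (toComplex p)) = toComplex (q / p) := by
  apply Complex.ext <;>
    simp [gaussRound, toComplex_re_div, toComplex_im_div]

open GaussianInt in
lemma hurwitzGauss_div (p q : GaussianInt) (hp : p ≠ 0) (hq : q ≠ 0) :
    hurwitzGauss (toComplex p / toComplex q) = toComplex (q % p) / toComplex p := by
  have hp' : (toComplex p : ℂ) ≠ 0 := by simpa [toComplex_eq_zero] using hp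
  have hq' : (toComplex q : ℂ) ≠ 0 := by simpa [toComplex_eq_zero] using hq
  have hz : toComplex p / toComplex q ≠ 0 := div_ne_zero hp' hq'
  rw [hurwitzGauss, if_neg hz, one_div_div, gaussRound_div]
  rw [GaussianInt.mod_def]
  push_cast [GaussianInt.toComplex_sub, GaussianInt.toComplex_mul]
  field_simp

open GaussianInt in
lemma terminates_aux : ∀ N (p q : GaussianInt), p.norm.natAbs < N → q ≠ 0 →
    ∃ n : ℕ, hurwitzGauss^[n] (toComplex p / toComplex q) = 0 := by
  intro N
  induction N with
  | zero => intro p q h _; exact absurd h (Nat.not_lt_zero _)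
  | succ N ih =>
    intro p q hN hq
    by_cases hp : p = 0
    · exact ⟨0, by simp [hp]⟩
    · obtain ⟨n, hn⟩ := ih (q % p) p
        (lt_of_lt_of_le (natAbs_norm_mod_lt q hp) (Nat.lt_succ_iff.mp hN)) hp
      exact ⟨n + 1, by
        rw [Function.iterate_succ_apply, hurwitzGauss_div p q hp hq, hn]⟩

open GaussianInt in
lemma terminates (p q : GaussianInt) (hq : q ≠ 0) :
    ∃ n : ℕ, hurwitzGauss^[n] (toComplex p / toComplex q) = 0 :=
  terminates_aux (p.norm.natAbs + 1) p q (Nat.lt_succ_self _) hq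

/-- A complex number has a finite Hurwitz continued fraction expansion exactly when
it is a ratio of Gaussian integers. -/
theorem finite_hurwitz_cf_iff_gaussian_rational (z : ℂ) :
    (∃ n : ℕ, hurwitzGauss^[n] z = 0) ↔
      ∃ p q : GaussianInt, q ≠ 0 ∧
        z = GaussianInt.toComplex p / GaussianInt.toComplex q := by
  constructor
  · rintro ⟨n, hn⟩
    induction n generalizing z with
    | zero =>
      rw [Function.iterate_zero_apply] at hn
      exact ⟨0, 1, one_ne_zero, by simp [hn]⟩
    | succ n ih =>
      rw [Function.iterate_succ_apply] at hn
      obtain ⟨p, q, hq, hz⟩ := ih _ hn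
      by_cases h0 : z = 0
      · exact ⟨0, 1, one_ne_zero, by simp [h0]⟩
      · set a : GaussianInt := ⟨round (1/z).re, round (1/z).im⟩ with ha
        have hga : gaussRound (1/z) = GaussianInt.toComplex a := by
          apply Complex.ext <;> simp [gaussRound, ha, GaussianInt.toComplex_def']
        have hq' : (GaussianInt.toComplex q : ℂ) ≠ 0 := by
          simpa [GaussianInt.toComplex_eq_zero] using hq
        have key : 1/z = GaussianInt.toComplex (p + a * q) / GaussianInt.toComplex q := by
          rw [hurwitzGauss, if_neg h0, hga] at hz
          push_cast [GaussianInt.toComplex_add, GaussianInt.toComplex_mul]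
          field_simp at hz ⊢
          linear_combination hz
        have hnum : p + a * q ≠ 0 := by
          intro h
          rw [h] at key
          simp only [GaussianInt.toComplex_zero, zero_div, one_div, inv_eq_zero] at key
          exact h0 key
        refine ⟨q, p + a * q, hnum, ?_⟩
        rw [one_div] at key
        rw [← inv_inv z, key, ← one_div, one_div_div]
  · rintro ⟨p, q, hq, rfl⟩
    exact terminates p q hq
end

section
/- For every complex number z, z is a quadratic surd over ℤ[i] — that is, there exist Gaussian integers a, b, c with a ≠ 0 and a·z² + b·z + c = 0, while q·z ≠ p for all Gaussian integers p, q with q ≠ 0 — if and only if there exist natural numbers m < n with T^[m] z = T^[n] z and T^[m] z ≠ 0, where T is the Hurwitz complex Gauss map. (Lagrange's theorem for Hurwitz complex continued fractions.) -/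
open GaussianInt

noncomputable def gRound (w : ℂ) : GaussianInt := ⟨round w.re, round w.im⟩

lemma toComplex_gRound (w : ℂ) : toComplex (gRound w) = gaussRound w := by
  simp [gRound, gaussRound, toComplex_def]

lemma hurwitz_apply {z : ℂ} (hz : z ≠ 0) :
    hurwitzGauss z = 1/z - toComplex (gRound (1/z)) := by
  rw [hurwitzGauss, if_neg hz, toComplex_gRound]

lemma hurwitz_zero : hurwitzGauss 0 = 0 := by simp [hurwitzGauss]

lemma sq_abs_hurwitz_le (z : ℂ) : ‖hurwitzGauss z‖ ^ 2 ≤ 1/2 := by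
  by_cases hz : z = 0
  · simp [hz, hurwitz_zero]
  · rw [hurwitz_apply hz]
    set w := 1/z
    have hre : (w - toComplex (gRound w)).re = w.re - round w.re := by
      simp [gRound, toComplex_def]
    have him : (w - toComplex (gRound w)).im = w.im - round w.im := by
      simp [gRound, toComplex_def]
    rw [Complex.sq_norm, Complex.normSq_apply, hre, him]
    have h1 : |w.re - round w.re| ≤ 1/2 := abs_sub_round w.re
    have h2 : |w.im - round w.im| ≤ 1/2 := abs_sub_round w.im
    nlinarith [abs_nonneg (w.re - round w.re), abs_nonneg (w.im - round w.im),
      sq_abs (w.re - round w.re), sq_abs (w.im - round w.im)]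

lemma hurwitz_rel {z : ℂ} (hz : z ≠ 0) :
    z * (toComplex (gRound (1/z)) + hurwitzGauss z) = 1 := by
  rw [hurwitz_apply hz]
  field_simp
  ring

lemma mobius_exists (z : ℂ) (hnz : ∀ j, hurwitzGauss^[j] z ≠ 0) (k : ℕ) :
    ∃ α β γ δ : GaussianInt,
      α * δ - β * γ = (-1)^k ∧
      (toComplex γ * hurwitzGauss^[k] z + toComplex δ) *
        (∏ j ∈ Finset.range k, hurwitzGauss^[j] z) = 1 ∧
      toComplex α * hurwitzGauss^[k] z + toComplex β =
        z * (toComplex γ * hurwitzGauss^[k] z + toComplex δ) := by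
  induction k with
  | zero => exact ⟨1, 0, 0, 1, by ring, by simp, by simp [Function.iterate_zero]⟩
  | succ k ih =>
    obtain ⟨α, β, γ, δ, hdet, hbot, htop⟩ := ih
    set v := hurwitzGauss^[k] z with hvdef
    have hv : v ≠ 0 := hnz k
    set a := gRound (1/v) with hadef
    have hr : v * (toComplex a + hurwitzGauss v) = 1 := hurwitz_rel hv
    have hiter : hurwitzGauss^[k+1] z = hurwitzGauss v := by
      rw [Function.iterate_succ_apply', hvdef]
    refine ⟨β, α + β * a, δ, γ + δ * a, ?_, ?_, ?_⟩
    · rw [pow_succ]; linear_combination (-1 : GaussianInt) * hdet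
    · rw [hiter, Finset.prod_range_succ, ← hvdef]
      simp only [map_add, map_mul]
      linear_combination hbot + toComplex δ *
        (∏ j ∈ Finset.range k, hurwitzGauss^[j] z) * hr
    · rw [hiter]
      simp only [map_add, map_mul]
      refine mul_right_cancel₀ hv ?_
      linear_combination htop + (toComplex β - z * toComplex δ) * hr

def Irr (z : ℂ) : Prop := ∀ p q : GaussianInt, q ≠ 0 → toComplex q * z ≠ toComplex p

lemma Irr.ne_zero {z : ℂ} (h : Irr z) : z ≠ 0 := by
  intro hz
  exact h 0 1 one_ne_zero (by simp [hz])

lemma Irr.hurwitz {z : ℂ} (h : Irr z) : Irr (hurwitzGauss z) := by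
  have hz := h.ne_zero
  intro P Q hQ hPQ
  rw [hurwitz_apply hz] at hPQ
  set α := gRound (1/z)
  -- Q*(1/z - α) = P  ⇒  Q = (P + Q α) z
  have h2 : toComplex Q = (toComplex P + toComplex Q * toComplex α) * z := by
    field_simp at hPQ
    linear_combination hPQ
  have h3 : P + Q * α ≠ 0 := by
    intro h0
    have : toComplex P + toComplex Q * toComplex α = 0 := by
      have := congrArg toComplex h0
      simpa [map_add, map_mul] using this
    rw [this, zero_mul] at h2
    exact hQ (toComplex_eq_zero.mp h2)
  exact h Q (P + Q * α) h3 (by rw [map_add, map_mul]; exact h2.symm)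

lemma Irr.iterate {z : ℂ} (h : Irr z) (k : ℕ) : Irr (hurwitzGauss^[k] z) := by
  induction k with
  | zero => exact h
  | succ k ih => rw [Function.iterate_succ_apply']; exact ih.hurwitz

/-- coefficient triples along the Hurwitz orbit -/
noncomputable def hcoef (z : ℂ) (t : GaussianInt × GaussianInt × GaussianInt) :
    ℕ → GaussianInt × GaussianInt × GaussianInt
  | 0 => t
  | k+1 =>
    let p := hcoef z t k
    let a := gRound (1 / hurwitzGauss^[k] z)
    (p.2.2, p.2.1 + 2 * a * p.2.2, p.1 + a * p.2.1 + a^2 * p.2.2)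

lemma one_le_sq_abs {u : GaussianInt} (hu : u ≠ 0) : 1 ≤ ‖toComplex u‖^2 := by
  have h2 : ‖toComplex u‖^2 = (u.re:ℝ)^2 + (u.im:ℝ)^2 := by
    rw [Complex.sq_norm, Complex.normSq_apply, ← intCast_re, ← intCast_im]; ring
  have h3 : u.re ≠ 0 ∨ u.im ≠ 0 := by
    by_contra h
    push_neg at h
    exact hu (Zsqrtd.ext h.1 h.2)
  rcases h3 with h | h
  · have h4 : 1 ≤ |u.re| := Int.one_le_abs h
    have h5 : (1:ℝ) ≤ |(u.re:ℝ)| := by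
      rw [← Int.cast_abs]; exact_mod_cast h4
    nlinarith [sq_nonneg ((u.im:ℝ)), sq_abs ((u.re:ℝ))]
  · have h4 : 1 ≤ |u.im| := Int.one_le_abs h
    have h5 : (1:ℝ) ≤ |(u.im:ℝ)| := by
      rw [← Int.cast_abs]; exact_mod_cast h4
    nlinarith [sq_nonneg ((u.re:ℝ)), sq_abs ((u.im:ℝ))]

lemma iter_ne_zero {z : ℂ} {m n : ℕ} (hmn : m < n)
    (hper : hurwitzGauss^[m] z = hurwitzGauss^[n] z) (hne : hurwitzGauss^[m] z ≠ 0) :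
    ∀ j, hurwitzGauss^[j] z ≠ 0 := by
  have hzero : ∀ j l, j ≤ l → hurwitzGauss^[j] z = 0 → hurwitzGauss^[l] z = 0 := by
    intro j l hjl h0
    induction l with
    | zero => simpa [Nat.le_zero.mp hjl] using h0
    | succ l ih =>
      rcases Nat.lt_or_ge j (l+1) with h | h
      · have := ih (Nat.lt_succ_iff.mp h)
        rw [Function.iterate_succ_apply', this, hurwitz_zero]
      · have : j = l + 1 := le_antisymm hjl h
        rwa [← this]
  set p := n - m with hp
  have hp1 : 1 ≤ p := by omega
  have hnm : n = m + p := by omega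
  have hstep : ∀ t, hurwitzGauss^[m + t * p] z = hurwitzGauss^[m] z := by
    intro t
    induction t with
    | zero => simp
    | succ t ih =>
      have e : m + (t+1) * p = p + (m + t * p) := by ring
      rw [e, Function.iterate_add_apply, ih, ← Function.iterate_add_apply,
        show p + m = n from by omega, ← hper]
  intro j h0
  have : hurwitzGauss^[m + j * p] z = 0 := hzero j (m + j * p) (by nlinarith) h0
  rw [hstep j] at this
  exact hne this

lemma irr_of_all_ne_zero {z : ℂ} (hnz : ∀ j, hurwitzGauss^[j] z ≠ 0) :
    ∀ p q : GaussianInt, q ≠ 0 → toComplex q * z ≠ toComplex p := by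
  intro p q hq0 hq
  have claim : ∀ k, ∃ u v : GaussianInt, v ≠ 0 ∧
      toComplex v * hurwitzGauss^[k] z = toComplex u ∧
      ‖toComplex u‖^2 * 2^k ≤ ‖toComplex p‖^2 := by
    intro k
    induction k with
    | zero => exact ⟨p, q, hq0, by simpa using hq, by simp⟩
    | succ k ih =>
      obtain ⟨u, v, hv0, he, hb⟩ := ih
      set zk := hurwitzGauss^[k] z with hzk
      have hzk0 : zk ≠ 0 := hnz k
      have hu0 : u ≠ 0 := by
        intro h
        rw [h, map_zero, mul_eq_zero] at he
        rcases he with h' | h'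
        · exact hv0 (toComplex_eq_zero.mp h')
        · exact hzk0 h'
      have hrel := hurwitz_rel hzk0
      set a := gRound (1/zk) with ha
      have hiter : hurwitzGauss^[k+1] z = hurwitzGauss zk := Function.iterate_succ_apply' _ _ _
      refine ⟨v - a * u, u, hu0, ?_, ?_⟩
      · rw [hiter]
        simp only [map_sub, map_mul]
        refine mul_right_cancel₀ hzk0 ?_
        linear_combination toComplex u * hrel - he
      · have he2 : toComplex (v - a*u) = toComplex u * hurwitzGauss zk := by
          simp only [map_sub, map_mul]
          refine mul_right_cancel₀ hzk0 ?_
          linear_combination he - toComplex u * hrel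
        have habs : ‖toComplex (v - a*u)‖^2
            = ‖toComplex u‖^2 * ‖hurwitzGauss zk‖^2 := by
          rw [he2, norm_mul]; ring
        have hsq := sq_abs_hurwitz_le zk
        have h0 : (0:ℝ) ≤ ‖toComplex u‖^2 := sq_nonneg _
        rw [habs]
        have : (2:ℝ)^(k+1) = 2^k * 2 := by ring
        rw [this]
        nlinarith [sq_nonneg (‖hurwitzGauss zk‖), pow_pos (by norm_num : (0:ℝ) < 2) k]
  obtain ⟨k, hk⟩ := pow_unbounded_of_one_lt (‖toComplex p‖^2) (by norm_num : (1:ℝ) < 2)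
  obtain ⟨u, v, hv0, he, hb⟩ := claim k
  have hu0 : u ≠ 0 := by
    intro h
    rw [h, map_zero, mul_eq_zero] at he
    rcases he with h' | h'
    · exact hv0 (toComplex_eq_zero.mp h')
    · exact hnz k h'
  have h1 := one_le_sq_abs hu0
  nlinarith [pow_pos (by norm_num : (0:ℝ) < 2) k]

lemma backward {z : ℂ} {m n : ℕ} (hmn : m < n)
    (hper : hurwitzGauss^[m] z = hurwitzGauss^[n] z) (hne : hurwitzGauss^[m] z ≠ 0) :
    (∃ a b c : GaussianInt, a ≠ 0 ∧
        toComplex a * z ^ 2 + toComplex b * z + toComplex c = 0) ∧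
      (∀ p q : GaussianInt, q ≠ 0 → toComplex q * z ≠ toComplex p) := by
  have hnz := iter_ne_zero hmn hper hne
  have hirr := irr_of_all_ne_zero hnz
  refine ⟨?_, hirr⟩
  set y := hurwitzGauss^[m+1] z with hy
  have hnzy : ∀ j, hurwitzGauss^[j] y ≠ 0 := by
    intro j
    rw [hy, ← Function.iterate_add_apply]
    exact hnz _
  have hirry := irr_of_all_ne_zero hnzy
  set p := n - m with hpdef
  have hp1 : 1 ≤ p := by omega
  -- periodicity of y
  have hpy : hurwitzGauss^[p] y = y := by
    rw [hy, ← Function.iterate_add_apply, show p + (m+1) = 1 + n from by omega,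
      Function.iterate_add_apply, ← hper, ← Function.iterate_add_apply,
      show 1 + m = m + 1 from by omega]
  -- iterates of y are in the image of T, hence small
  have hsmall : ∀ j : ℕ, ‖hurwitzGauss^[j] y‖^2 ≤ 1/2 := by
    intro j
    rw [hy, ← Function.iterate_add_apply, show j + (m+1) = (j+m) + 1 from by omega,
      Function.iterate_succ_apply']
    exact sq_abs_hurwitz_le _
  obtain ⟨α, β, γ, δ, hdet, hbot, htop⟩ := mobius_exists y hnzy p
  rw [hpy] at hbot htop
  set P := ∏ j ∈ Finset.range p, hurwitzGauss^[j] y with hP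
  have hPsq : ‖P‖ ^ 2 ≤ (1/2)^p := by
    rw [hP, norm_prod, ← Finset.prod_pow]
    calc (∏ j ∈ Finset.range p, ‖hurwitzGauss^[j] y‖^2)
        ≤ ∏ j ∈ Finset.range p, (1/2 : ℝ) :=
          Finset.prod_le_prod (fun j _ => sq_nonneg _) (fun j _ => hsmall j)
      _ = (1/2)^p := by rw [Finset.prod_const, Finset.card_range]
  have hPhalf : ‖P‖ ^ 2 ≤ 1/2 := by
    refine hPsq.trans ?_
    calc ((1:ℝ)/2)^p ≤ (1/2)^1 := pow_le_pow_of_le_one (by norm_num) (by norm_num) hp1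
      _ = 1/2 := by norm_num
  -- γ ≠ 0
  have hγ : γ ≠ 0 := by
    intro hγ0
    rw [hγ0] at hdet hbot
    simp only [map_zero, zero_mul, zero_add, mul_zero, sub_zero] at hdet hbot
    have hδ0 : δ ≠ 0 := by
      intro h
      rw [h, mul_zero] at hdet
      exact pow_ne_zero p (by decide : (-1 : GaussianInt) ≠ 0) hdet.symm
    have h1 := one_le_sq_abs hδ0
    have hα0 : α ≠ 0 := by
      intro h
      rw [h, zero_mul] at hdet
      exact pow_ne_zero p (by decide : (-1 : GaussianInt) ≠ 0) hdet.symm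
    have h2 := one_le_sq_abs hα0
    -- |α|^2 |δ|^2 = 1
    have h3 : ‖toComplex α‖^2 * ‖toComplex δ‖^2 = 1 := by
      have e : toComplex α * toComplex δ = ((-1 : ℂ))^p := by
        rw [← map_mul, hdet]; simp
      have := congrArg (fun t => ‖t‖ ^ 2) e
      simpa [map_mul, mul_pow] using this
    have h4 : ‖toComplex δ‖^2 ≤ 1 := by nlinarith
    have h5 : ‖toComplex δ‖^2 * ‖P‖ ^2 = 1 := by
      have := congrArg (fun t => ‖t‖ ^ 2) hbot
      simpa [map_mul, mul_pow] using this
    nlinarith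
  -- quadratic for y
  have hquady : toComplex γ * y^2 + (toComplex δ - toComplex α) * y - toComplex β = 0 := by
    linear_combination -htop
  obtain ⟨α₂, β₂, γ₂, δ₂, hdet2, hbot2, htop2⟩ := mobius_exists z hnz (m+1)
  rw [← hy] at hbot2 htop2
  have hden : toComplex α₂ - z * toComplex γ₂ ≠ 0 := by
    intro h0
    by_cases hγ2 : γ₂ = 0
    · rw [hγ2, map_zero, mul_zero, sub_zero] at h0
      have hα2 : α₂ = 0 := toComplex_eq_zero.mp h0
      rw [hγ2, hα2, zero_mul, mul_zero, sub_zero] at hdet2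
      exact pow_ne_zero (m+1) (by decide : (-1 : GaussianInt) ≠ 0) hdet2.symm
    · refine hirr α₂ γ₂ hγ2 ?_
      linear_combination -h0
  have hsub : (toComplex α₂ - z * toComplex γ₂) * y = z * toComplex δ₂ - toComplex β₂ := by
    linear_combination htop2
  set aG := γ * δ₂^2 - (δ - α) * δ₂ * γ₂ - β * γ₂^2 with haG
  set bG := (δ - α) * (δ₂ * α₂ + β₂ * γ₂) + 2 * β * α₂ * γ₂ - 2 * γ * β₂ * δ₂ with hbG
  set cG := γ * β₂^2 - (δ - α) * β₂ * α₂ - β * α₂^2 with hcG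
  have hquadz : toComplex aG * z^2 + toComplex bG * z + toComplex cG = 0 := by
    rw [haG, hbG, hcG]
    simp only [map_add, map_sub, map_mul, map_pow, map_ofNat]
    linear_combination (toComplex α₂ - z * toComplex γ₂)^2 * hquady -
      (toComplex γ * ((z * toComplex δ₂ - toComplex β₂) +
          (toComplex α₂ - z * toComplex γ₂) * y) +
        (toComplex δ - toComplex α) * (toComplex α₂ - z * toComplex γ₂)) * hsub
  have haG0 : aG ≠ 0 := by
    intro h0
    rw [h0, map_zero, zero_mul, zero_add] at hquadz
    have hbG0 : bG = 0 := by
      by_contra hb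
      exact hirr (-cG) bG hb (by rw [map_neg]; linear_combination hquadz)
    rw [hbG0, map_zero, zero_mul, zero_add] at hquadz
    have hcG0 : cG = 0 := toComplex_eq_zero.mp hquadz
    have hdisc : bG^2 - 4 * aG * cG = ((δ - α)^2 + 4 * γ * β) * (α₂ * δ₂ - β₂ * γ₂)^2 := by
      rw [haG, hbG, hcG]; ring
    rw [h0, hbG0, hcG0, hdet2] at hdisc
    have hsq1 : ((-1 : GaussianInt)^(m+1))^2 = 1 := by
      rw [← pow_mul, mul_comm, pow_mul]; simp
    rw [hsq1, mul_one] at hdisc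
    have hdisc0 : ((δ - α)^2 + 4 * γ * β : GaussianInt) = 0 := by linear_combination -hdisc
    have e := congrArg toComplex hdisc0
    simp only [map_add, map_sub, map_mul, map_pow, map_ofNat, map_zero] at e
    have hz2 : (2 * toComplex γ * y + (toComplex δ - toComplex α))^2 = 0 := by
      linear_combination 4 * toComplex γ * hquady + e
    have hz3 : 2 * toComplex γ * y + (toComplex δ - toComplex α) = 0 :=
      pow_eq_zero_iff (by norm_num) |>.mp hz2
    refine hirry (α - δ) (2 * γ) (mul_ne_zero (by decide) hγ) ?_
    rw [map_sub, map_mul, map_ofNat]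
    linear_combination hz3
  exact ⟨aG, bG, cG, haG0, hquadz⟩

lemma Cne {w : ℂ} (hw : Irr w) {A B C : GaussianInt} (hA : A ≠ 0)
    (hq : toComplex A * w^2 + toComplex B * w + toComplex C = 0) : C ≠ 0 := by
  intro h0
  rw [h0, map_zero, add_zero] at hq
  refine hw (-B) A hA ?_
  rw [map_neg]
  have hw0 : w ≠ 0 := hw.ne_zero
  have h2 : w * (toComplex A * w + toComplex B) = 0 := by linear_combination hq
  rcases mul_eq_zero.mp h2 with h | h
  · exact absurd h hw0
  · linear_combination h

lemma quad_step {w : ℂ} (hw0 : w ≠ 0) {A B C : GaussianInt}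
    (hq : toComplex A * w^2 + toComplex B * w + toComplex C = 0) :
    toComplex C * (hurwitzGauss w)^2
      + toComplex (B + 2 * gRound (1/w) * C) * hurwitzGauss w
      + toComplex (A + gRound (1/w) * B + (gRound (1/w))^2 * C) = 0 := by
  have hrel := hurwitz_rel hw0
  simp only [map_add, map_mul, map_pow, map_ofNat]
  refine mul_right_cancel₀ (pow_ne_zero 2 hw0) ?_
  rw [zero_mul]
  linear_combination hq + (toComplex B * w
    + toComplex C * ((toComplex (gRound (1/w)) + hurwitzGauss w) * w + 1)) * hrel

lemma invariants {z : ℂ} (hz : Irr z) {a b c : GaussianInt} (ha : a ≠ 0)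
    (hq : toComplex a * z^2 + toComplex b * z + toComplex c = 0) (k : ℕ) :
    (hcoef z (a,b,c) k).1 ≠ 0 ∧ (hcoef z (a,b,c) k).2.2 ≠ 0 ∧
    (toComplex (hcoef z (a,b,c) k).1 * (hurwitzGauss^[k] z)^2
      + toComplex (hcoef z (a,b,c) k).2.1 * (hurwitzGauss^[k] z)
      + toComplex (hcoef z (a,b,c) k).2.2 = 0) ∧
    (hcoef z (a,b,c) k).2.1^2 - 4 * (hcoef z (a,b,c) k).1 * (hcoef z (a,b,c) k).2.2
      = b^2 - 4*a*c := by
  induction k with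
  | zero => exact ⟨ha, Cne hz ha hq, by simpa [hcoef] using hq, by simp [hcoef]⟩
  | succ k ih =>
    obtain ⟨hA, hC, hq', hd⟩ := ih
    have hirrk := hz.iterate k
    have hirrk1 := hz.iterate (k+1)
    have hstep : hcoef z (a,b,c) (k+1) =
        ((hcoef z (a,b,c) k).2.2,
         (hcoef z (a,b,c) k).2.1 + 2 * gRound (1 / hurwitzGauss^[k] z) * (hcoef z (a,b,c) k).2.2,
         (hcoef z (a,b,c) k).1 + gRound (1 / hurwitzGauss^[k] z) * (hcoef z (a,b,c) k).2.1
           + (gRound (1 / hurwitzGauss^[k] z))^2 * (hcoef z (a,b,c) k).2.2) := rfl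
    have hq2 : toComplex (hcoef z (a,b,c) (k+1)).1 * (hurwitzGauss^[k+1] z)^2
        + toComplex (hcoef z (a,b,c) (k+1)).2.1 * (hurwitzGauss^[k+1] z)
        + toComplex (hcoef z (a,b,c) (k+1)).2.2 = 0 := by
      rw [hstep, Function.iterate_succ_apply']
      exact quad_step hirrk.ne_zero hq'
    refine ⟨by rw [hstep]; exact hC, Cne hirrk1 (by rw [hstep]; exact hC) hq2, hq2, ?_⟩
    rw [hstep]
    simp only
    linear_combination hd

lemma finite_ball (R : ℝ) : Set.Finite {g : GaussianInt | ‖toComplex g‖ ≤ R} := by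
  set N : ℤ := ⌈R⌉ with hN
  have hsub : {g : GaussianInt | ‖toComplex g‖ ≤ R} ⊆
      (fun p : ℤ × ℤ => (⟨p.1, p.2⟩ : GaussianInt)) '' (Set.Icc (-N) N ×ˢ Set.Icc (-N) N) := by
    intro g hg
    refine ⟨(g.re, g.im), ?_, rfl⟩
    have h1 : |((g.re : ℤ) : ℝ)| ≤ ‖toComplex g‖ := by
      rw [intCast_re]
      exact Complex.abs_re_le_norm _
    have h2 : |((g.im : ℤ) : ℝ)| ≤ ‖toComplex g‖ := by
      rw [intCast_im]
      exact Complex.abs_im_le_norm _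
    have hRN : R ≤ (N : ℝ) := Int.le_ceil R
    have h3 : |((g.re : ℤ) : ℝ)| ≤ (N:ℝ) := le_trans (le_trans h1 hg) hRN
    have h4 : |((g.im : ℤ) : ℝ)| ≤ (N:ℝ) := le_trans (le_trans h2 hg) hRN
    rw [← Int.cast_abs] at h3 h4
    have h5 : |g.re| ≤ N := by exact_mod_cast h3
    have h6 : |g.im| ≤ N := by exact_mod_cast h4
    exact ⟨Set.mem_Icc.mpr (abs_le.mp h5), Set.mem_Icc.mpr (abs_le.mp h6)⟩
  exact Set.Finite.subset (Set.Finite.image _ ((Set.finite_Icc _ _).prod (Set.finite_Icc _ _))) hsub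

lemma forward {z : ℂ} (hz : Irr z) {a b c : GaussianInt} (ha : a ≠ 0)
    (hq : toComplex a * z^2 + toComplex b * z + toComplex c = 0) :
    ∃ m n : ℕ, m < n ∧ hurwitzGauss^[m] z = hurwitzGauss^[n] z ∧
      hurwitzGauss^[m] z ≠ 0 := by
  have inv := invariants hz ha hq
  set Z : ℕ → ℂ := fun k => hurwitzGauss^[k] z with hZdef
  set F : ℕ → GaussianInt × GaussianInt × GaussianInt := fun k => hcoef z (a,b,c) k with hFdef
  set A : ℕ → ℂ := fun k => toComplex (F k).1 with hAdef
  set B : ℕ → ℂ := fun k => toComplex (F k).2.1 with hBdef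
  set C : ℕ → ℂ := fun k => toComplex (F k).2.2 with hCdef
  set Dc : ℂ := toComplex b ^ 2 - 4 * toComplex a * toComplex c with hDcdef
  have hA : ∀ k, A k ≠ 0 := fun k h => (inv k).1 (toComplex_eq_zero.mp h)
  have hCne : ∀ k, C k ≠ 0 := fun k h => (inv k).2.1 (toComplex_eq_zero.mp h)
  have hZne : ∀ k, Z k ≠ 0 := fun k => ((hz.iterate k)).ne_zero
  have hqk : ∀ k, A k * (Z k)^2 + B k * Z k + C k = 0 := fun k => (inv k).2.2.1
  have hdk : ∀ k, (B k)^2 - 4 * A k * C k = Dc := by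
    intro k
    have h := congrArg toComplex (inv k).2.2.2
    simp only [map_sub, map_mul, map_pow, map_ofNat] at h
    exact h
  set δ : ℕ → ℂ := fun k => -(B k + 2 * A k * Z k) / A k with hδdef
  have hAδ : ∀ k, A k * δ k = -(B k + 2 * A k * Z k) := by
    intro k
    rw [hδdef]
    simp only
    rw [mul_comm, div_mul_cancel₀ _ (hA k)]
  have hCA : ∀ k, C k = A k * Z k * (Z k + δ k) := by
    intro k
    linear_combination hqk k - Z k * hAδ k
  have hδne : ∀ k, δ k ≠ 0 := by
    intro k h0
    have h1 : B k + 2 * A k * Z k = 0 := by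
      have h2 := hAδ k
      rw [h0, mul_zero] at h2
      linear_combination h2
    refine (hz.iterate k) (-(F k).2.1) (2 * (F k).1)
      (mul_ne_zero (by decide) (inv k).1) ?_
    simp only [map_mul, map_ofNat, map_neg]
    linear_combination h1
  have hAδsq : ∀ k, (A k * δ k)^2 = Dc := by
    intro k
    linear_combination (A k * δ k - B k - 2 * A k * Z k) * hAδ k + 4 * A k * hqk k + hdk k
  have hDcne : Dc ≠ 0 := by
    rw [← hAδsq 0]
    exact pow_ne_zero 2 (mul_ne_zero (hA 0) (hδne 0))
  set E : ℝ := Real.sqrt (‖Dc‖) with hE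
  have hEpos : 0 < E := Real.sqrt_pos.mpr (norm_pos_iff.mpr hDcne)
  set dd : ℕ → ℝ := fun k => ‖δ k‖ with hdd
  set aa : ℕ → ℝ := fun k => ‖A k‖ with haa
  have hddpos : ∀ k, 0 < dd k := fun k => norm_pos_iff.mpr (hδne k)
  have haapos : ∀ k, 0 < aa k := fun k => norm_pos_iff.mpr (hA k)
  have hprod : ∀ k, aa k * dd k = E := by
    intro k
    have h2 : (aa k * dd k)^2 = ‖Dc‖ := by
      have := congrArg (fun t : ℂ => ‖t‖) (hAδsq k)
      rwa [norm_pow, norm_mul] at this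
    rw [hE, ← h2, Real.sqrt_sq (by positivity)]
  have hAsucc : ∀ k, A (k+1) = C k := by
    intro k
    rfl
  have haasucc : ∀ k, aa (k+1) = aa k * ‖Z k‖ * ‖Z k + δ k‖ := by
    intro k
    have h : A (k+1) = A k * Z k * (Z k + δ k) := by rw [hAsucc k, hCA k]
    show ‖A (k+1)‖ = ‖A k‖ * ‖Z k‖ * ‖Z k + δ k‖
    rw [h, norm_mul, norm_mul]
  have hd1 : ∀ k, dd (k+1) * (‖Z k‖ * ‖Z k + δ k‖) = dd k := by
    intro k
    have e1 : aa (k+1) * dd (k+1) = aa k * dd k := by rw [hprod, hprod]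
    rw [haasucc k] at e1
    refine mul_left_cancel₀ (ne_of_gt (haapos k)) ?_
    linear_combination e1
  have hZsq : ∀ k, 1 ≤ k → ‖Z k‖^2 ≤ 1/2 := by
    intro k hk
    obtain ⟨j, rfl⟩ : ∃ j, k = j + 1 := ⟨k-1, by omega⟩
    show ‖hurwitzGauss^[j+1] z‖^2 ≤ 1/2
    rw [Function.iterate_succ_apply']
    exact sq_abs_hurwitz_le _
  have hfac : ∀ k, 1 ≤ k → ‖Z k‖ * ‖Z k + δ k‖
      ≤ 1/2 + (3/4) * dd k := by
    intro k hk
    have h1 := hZsq k hk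
    have h2 : ‖Z k‖ ≤ 3/4 := by nlinarith [norm_nonneg (Z k)]
    have h3 : ‖Z k + δ k‖ ≤ ‖Z k‖ + dd k := norm_add_le _ _
    have h4 := (hddpos k).le
    nlinarith [norm_nonneg (Z k), norm_nonneg (Z k + δ k)]
  have hrec : ∀ k, 1 ≤ k → dd k ≤ dd (k+1) * (1/2 + (3/4) * dd k) := by
    intro k hk
    have hd := hd1 k
    have hb := hfac k hk
    have h5 := (hddpos (k+1)).le
    nlinarith [mul_nonneg h5 (sub_nonneg.mpr hb)]
  have growth1 : ∀ k, 1 ≤ k → dd k < 1/2 → (8/7) * dd k ≤ dd (k+1) := by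
    intro k hk h
    have h1 := hrec k hk
    nlinarith [hddpos (k+1), hddpos k]
  have growth2 : ∀ k, 1 ≤ k → 1/2 ≤ dd k → 1/2 ≤ dd (k+1) := by
    intro k hk h
    have h1 := hrec k hk
    nlinarith [hddpos (k+1)]
  have hKex : ∃ K, 1 ≤ K ∧ 1/2 ≤ dd K := by
    by_contra hcon
    push_neg at hcon
    have hgrow : ∀ j, (8/7:ℝ)^j * dd 1 ≤ dd (1+j) := by
      intro j
      induction j with
      | zero => simp
      | succ j ih =>
        have h1 := growth1 (1+j) (by omega) (hcon (1+j) (by omega))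
        calc (8/7:ℝ)^(j+1) * dd 1 = (8/7) * ((8/7)^j * dd 1) := by ring
          _ ≤ (8/7) * dd (1+j) := by nlinarith
          _ ≤ dd (1+(j+1)) := h1
    obtain ⟨j, hj⟩ := pow_unbounded_of_one_lt ((1/2)/dd 1) (by norm_num : (1:ℝ) < 8/7)
    have hd1pos := hddpos 1
    rw [div_lt_iff₀ hd1pos] at hj
    have h6 := hgrow j
    have h7 := hcon (1+j) (by omega)
    nlinarith
  obtain ⟨K, hK1, hKge⟩ := hKex
  have hKall : ∀ k, K ≤ k → 1/2 ≤ dd k := by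
    intro k hk
    refine Nat.le_induction hKge ?_ k hk
    intro k hk ih
    exact growth2 k (le_trans hK1 hk) ih
  have haab : ∀ k, K ≤ k → aa k ≤ 2*E := by
    intro k hk
    have h1 := hprod k
    have h2 := hKall k hk
    have h3 := haapos k
    nlinarith
  have hBb : ∀ k, K ≤ k → ‖B k‖ ≤ 5*E := by
    intro k hk
    have hCb : ‖C k‖ ≤ 2*E := haab (k+1) (by omega)
    have hb2 : (B k)^2 = Dc + 4 * A k * C k := by linear_combination hdk k
    have habs : ‖B k‖^2 ≤ ‖Dc‖ + 4 * (aa k) * ‖C k‖ := by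
      calc ‖B k‖^2 = ‖(B k)^2‖ := (norm_pow _ _).symm
        _ = ‖Dc + 4 * A k * C k‖ := by rw [hb2]
        _ ≤ ‖Dc‖ + ‖4 * A k * C k‖ := norm_add_le _ _
        _ = ‖Dc‖ + 4 * aa k * ‖C k‖ := by
            rw [norm_mul, norm_mul]
            norm_num
            left; rfl
    have hDcE : ‖Dc‖ = E^2 := (Real.sq_sqrt (norm_nonneg Dc)).symm
    nlinarith [norm_nonneg (B k), haab k hk, norm_nonneg (C k), hEpos]
  set S : Set GaussianInt := {g | ‖toComplex g‖ ≤ 5*E} with hS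
  have hSfin := finite_ball (5*E)
  have hS3fin : Set.Finite (S ×ˢ (S ×ˢ S)) := hSfin.prod (hSfin.prod hSfin)
  have hmem : ∀ k, K ≤ k → F k ∈ S ×ˢ (S ×ˢ S) := by
    intro k hk
    refine ⟨?_, ?_, ?_⟩
    · show ‖toComplex (F k).1‖ ≤ 5*E
      have h1 := haab k hk
      have : aa k = ‖toComplex (F k).1‖ := rfl
      nlinarith [hEpos]
    · show ‖toComplex (F k).2.1‖ ≤ 5*E
      exact hBb k hk
    · show ‖toComplex (F k).2.2‖ ≤ 5*E
      have h1 : ‖C k‖ ≤ 2*E := haab (k+1) (by omega)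
      have : ‖C k‖ = ‖toComplex (F k).2.2‖ := rfl
      nlinarith [hEpos]
  have hfiber : ∃ t ∈ S ×ˢ (S ×ˢ S), {k | K ≤ k ∧ F k = t}.Infinite := by
    by_contra hcon
    push_neg at hcon
    have hsub : Set.Ici K ⊆ ⋃ t ∈ S ×ˢ (S ×ˢ S), {k | K ≤ k ∧ F k = t} := by
      intro k hk
      exact Set.mem_biUnion (hmem k hk) ⟨hk, rfl⟩
    have hfin : (Set.Ici K).Finite :=
      Set.Finite.subset (Set.Finite.biUnion hS3fin
        (fun t ht => hcon t ht)) hsub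
    exact (Set.Ici_infinite K) hfin
  obtain ⟨t₀, ht₀, hinf⟩ := hfiber
  obtain ⟨k1, hk1⟩ := hinf.nonempty
  obtain ⟨k2, hk2, h12⟩ := hinf.exists_gt k1
  obtain ⟨k3, hk3, h23⟩ := hinf.exists_gt k2
  have eA1 : A k1 = toComplex t₀.1 := by rw [hAdef]; simp only [hk1.2]
  have eB1 : B k1 = toComplex t₀.2.1 := by rw [hBdef]; simp only [hk1.2]
  have eC1 : C k1 = toComplex t₀.2.2 := by rw [hCdef]; simp only [hk1.2]
  have eA2 : A k2 = toComplex t₀.1 := by rw [hAdef]; simp only [hk2.2]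
  have eB2 : B k2 = toComplex t₀.2.1 := by rw [hBdef]; simp only [hk2.2]
  have eC2 : C k2 = toComplex t₀.2.2 := by rw [hCdef]; simp only [hk2.2]
  have eA3 : A k3 = toComplex t₀.1 := by rw [hAdef]; simp only [hk3.2]
  have eB3 : B k3 = toComplex t₀.2.1 := by rw [hBdef]; simp only [hk3.2]
  have eC3 : C k3 = toComplex t₀.2.2 := by rw [hCdef]; simp only [hk3.2]
  have hq1 := hqk k1
  have hq2 := hqk k2
  have hq3 := hqk k3
  rw [eA1, eB1, eC1] at hq1
  rw [eA2, eB2, eC2] at hq2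
  rw [eA3, eB3, eC3] at hq3
  by_cases e12 : Z k1 = Z k2
  · exact ⟨k1, k2, h12, e12, (hz.iterate k1).ne_zero⟩
  by_cases e13 : Z k1 = Z k3
  · exact ⟨k1, k3, lt_trans h12 h23, e13, (hz.iterate k1).ne_zero⟩
  by_cases e23 : Z k2 = Z k3
  · exact ⟨k2, k3, h23, e23, (hz.iterate k2).ne_zero⟩
  exfalso
  have E12 : toComplex t₀.1 * (Z k1 + Z k2) + toComplex t₀.2.1 = 0 := by
    have hfac2 : (Z k1 - Z k2) * (toComplex t₀.1 * (Z k1 + Z k2) + toComplex t₀.2.1) = 0 := by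
      linear_combination hq1 - hq2
    rcases mul_eq_zero.mp hfac2 with h' | h'
    · exact absurd h' (sub_ne_zero.mpr e12)
    · exact h'
  have E13 : toComplex t₀.1 * (Z k1 + Z k3) + toComplex t₀.2.1 = 0 := by
    have hfac2 : (Z k1 - Z k3) * (toComplex t₀.1 * (Z k1 + Z k3) + toComplex t₀.2.1) = 0 := by
      linear_combination hq1 - hq3
    rcases mul_eq_zero.mp hfac2 with h' | h'
    · exact absurd h' (sub_ne_zero.mpr e13)
    · exact h'
  have hfin2 : toComplex t₀.1 * (Z k2 - Z k3) = 0 := by linear_combination E12 - E13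
  rcases mul_eq_zero.mp hfin2 with h' | h'
  · exact hA k1 (by rw [eA1]; exact h')
  · exact e23 (sub_eq_zero.mp h')

/-- Lagrange's theorem for Hurwitz complex continued fractions: the expansion is
infinite and eventually periodic exactly for quadratic surds over `ℤ[i]`. -/
theorem hurwitz_eventually_periodic_iff_quadratic_surd (z : ℂ) :
    ((∃ a b c : GaussianInt, a ≠ 0 ∧
        GaussianInt.toComplex a * z ^ 2 + GaussianInt.toComplex b * z
          + GaussianInt.toComplex c = 0) ∧
      (∀ p q : GaussianInt, q ≠ 0 → GaussianInt.toComplex q * z ≠ GaussianInt.toComplex p)) ↔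
    ∃ m n : ℕ, m < n ∧ hurwitzGauss^[m] z = hurwitzGauss^[n] z ∧
      hurwitzGauss^[m] z ≠ 0 := by
  constructor
  · rintro ⟨⟨a, b, c, ha, hq⟩, hirr⟩
    exact forward hirr ha hq
  · rintro ⟨m, n, hmn, hper, hne⟩
    exact backward hmn hper hne
end

section
/- Let a, b be real numbers with |a| ≤ 1/2 and |b| ≥ √2, and set C₀ = (1/7)·√(3·(9 − 4·√2)). Then there exists z ∈ ℂ with Im z > 0, |z| = 1, and |2·z − (a + b)| = |b − a|; and every z ∈ ℂ with Im z > 0, |z| = 1, and |2·z − (a + b)| = |b − a| satisfies Im z ≥ C₀. (The hyperbolic geodesic joining a widely-spaced pair of boundary points crosses the unit circle at height at least C₀.) -/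
set_option maxHeartbeats 1000000 in
/-- The hyperbolic geodesic joining a widely-spaced pair of boundary points
(`|a| ≤ 1/2`, `|b| ≥ √2`) crosses the unit circle, and every crossing point has
imaginary part at least `C₀ = (1/7)·√(3·(9 − 4·√2))`. -/
theorem geodesic_crosses_unit_circle_high (a b : ℝ)
    (ha : |a| ≤ 1 / 2) (hb : |b| ≥ Real.sqrt 2) :
    (∃ z : ℂ, 0 < z.im ∧ ‖z‖ = 1 ∧
      ‖2 * z - ((a : ℂ) + (b : ℂ))‖ = |b - a|) ∧
    ∀ z : ℂ, 0 < z.im → ‖z‖ = 1 →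
      ‖2 * z - ((a : ℂ) + (b : ℂ))‖ = |b - a| →
      (1 / 7) * Real.sqrt (3 * (9 - 4 * Real.sqrt 2)) ≤ z.im := by
  set s := Real.sqrt 2 with hsdef
  have hs : s^2 = 2 := Real.sq_sqrt (by norm_num)
  have hs1 : 1 < s := by nlinarith [Real.sqrt_nonneg 2]
  have hs32 : s ≤ 3/2 := by nlinarith [Real.sqrt_nonneg 2]
  have ha2 : a^2 ≤ 1/4 := by nlinarith [sq_abs a, abs_nonneg a]
  have hb2 : 2 ≤ b^2 := by nlinarith [sq_abs b, abs_nonneg b]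
  have hab : a + b ≠ 0 := by
    intro h
    have : b = -a := by linarith
    rw [this, abs_neg] at hb
    nlinarith [abs_nonneg a]
  have habsq : 0 < (a+b)^2 := by positivity
  -- product formula
  have hprod : 0 < (1 - a^2) * (b^2 - 1) := by nlinarith
  -- key inequality
  have hkey : 3 * (9 - 4*s) * (a+b)^2 ≤ 49 * (1-a^2) * (b^2-1) := by
    set t := |b| with ht
    have habs : (a+b)^2 ≤ (1/2 + t)^2 := by
      have h1 : |a + b| ≤ 1/2 + t := by
        calc |a+b| ≤ |a| + |b| := abs_add_le _ _
          _ ≤ 1/2 + t := by nlinarith [sq_abs a, abs_nonneg a]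
      nlinarith [sq_abs (a+b), abs_nonneg (a+b), abs_nonneg b]
    have hq : 3 * (9 - 4*s) * (1/2 + t)^2 ≤ (147/4) * (t^2 - 1) := by
      nlinarith [mul_nonneg (sub_nonneg.2 hb) (sub_nonneg.2 hb), sq_nonneg (t - s),
        mul_nonneg (mul_nonneg (sub_nonneg.2 hb) (sub_nonneg.2 hb)) (le_of_lt (lt_trans one_pos hs1))]
    have hbb : b^2 = t^2 := (sq_abs b).symm
    nlinarith [mul_nonneg (mul_nonneg (by norm_num : (0:ℝ) ≤ 3) (by nlinarith : (0:ℝ) ≤ 9 - 4*s)) (sq_nonneg (1/2+t))]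
  constructor
  · -- existence
    obtain ⟨x, hxdef⟩ : ∃ x : ℝ, x = (1 + a*b)/(a+b) := ⟨_, rfl⟩
    have hx : (a+b) * x = 1 + a*b := by rw [hxdef]; field_simp
    have hd : (1 + a*b)^2 < (a+b)^2 := by nlinarith
    have hx2 : x^2 < 1 := by
      rw [hxdef, div_pow, div_lt_one habsq]; exact hd
    obtain ⟨y, hydef⟩ : ∃ y : ℝ, y = Real.sqrt (1 - x^2) := ⟨_, rfl⟩
    have hy : 0 < y := by rw [hydef]; exact Real.sqrt_pos.2 (by linarith)
    have hy2 : y^2 = 1 - x^2 := by rw [hydef]; exact Real.sq_sqrt (by linarith)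
    refine ⟨⟨x, y⟩, hy, ?_, ?_⟩
    · rw [Complex.norm_def, Complex.normSq_mk]
      have : x * x + y * y = 1 := by nlinarith
      rw [this, Real.sqrt_one]
    · rw [Complex.norm_def]
      have hre : (2 * (⟨x, y⟩ : ℂ) - ((a : ℂ) + (b : ℂ))).re = 2*x - (a+b) := by simp
      have him : (2 * (⟨x, y⟩ : ℂ) - ((a : ℂ) + (b : ℂ))).im = 2*y := by simp
      rw [Complex.normSq_apply, hre, him]
      have : (2*x - (a+b)) * (2*x - (a+b)) + (2*y) * (2*y) = (b-a)^2 := by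
        nlinarith [hx, hy2]
      rw [this, Real.sqrt_sq_eq_abs]
  · -- lower bound
    intro z hzim hz1 hz2
    have h1 : z.re^2 + z.im^2 = 1 := by
      have := Complex.sq_norm z
      rw [hz1] at this
      rw [Complex.normSq_apply] at this
      nlinarith [this]
    have h2 : (2*z.re - (a+b))^2 + (2*z.im)^2 = (b-a)^2 := by
      have := Complex.sq_norm (2 * z - ((a : ℂ) + (b : ℂ)))
      rw [hz2, sq_abs, Complex.normSq_apply] at this
      have hre : (2 * z - ((a : ℂ) + (b : ℂ))).re = 2*z.re - (a+b) := by simp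
      have him : (2 * z - ((a : ℂ) + (b : ℂ))).im = 2*z.im := by simp
      rw [hre, him] at this
      nlinarith [this]
    have h3 : (a+b) * z.re = 1 + a*b := by nlinarith [h1, h2]
    have him2 : z.im^2 * (a+b)^2 = (1-a^2)*(b^2-1) := by
      linear_combination (a+b)^2 * h1 - ((a+b)*z.re + (1+a*b)) * h3
    have hc0sq : ((1 / 7) * Real.sqrt (3 * (9 - 4 * s)))^2 = 3 * (9 - 4*s) / 49 := by
      rw [mul_pow, Real.sq_sqrt (by nlinarith)]; ring
    have hc0nn : 0 ≤ (1 / 7) * Real.sqrt (3 * (9 - 4 * s)) := by positivity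
    have hylb : ((1 / 7) * Real.sqrt (3 * (9 - 4 * s)))^2 ≤ z.im^2 := by
      rw [hc0sq]
      rw [div_le_iff₀ (by norm_num : (0:ℝ) < 49)]
      nlinarith [him2, hkey]
    nlinarith [hylb, hc0nn, hzim]
end

section
/- Let d be a natural number with d > 4. On ℝ^d define the inversion ι(x) = (x₁, −x₂, …, −x_d)/(x₁² + ⋯ + x_d²) for x ≠ 0 (and ι(0) = 0), let a = (0, 1, 1, …, 1), and define the sequence w₁ = a, w_{n+1} = a + ι(w_n). Then w_n ≠ 0 for every n ≥ 1; that is, a + [a, …, a] ≠ 0 for continued fractions with all digits equal to a of arbitrary length. (Proposition 5.2: no analogue of the quaternionic identities exists in dimension greater than 4.) -/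
/-!
Every `w n` lies on the ray through `a`: if `w = y • a` with `y ≠ 0`, then `‖w‖² = (d - 1) y²` and,
as `a₁ = 0`, `ι(w) = -((d - 1) y)⁻¹ • a`. Hence `w n = y n • a` with `y 1 = 1` and
`y (n + 1) = 1 - ((d - 1) y n)⁻¹`. For `d ≥ 5` the interval `[1/2, ∞)` is invariant under this map,
because `((d - 1) y)⁻¹ ≤ (4 · 1/2)⁻¹ = 1/2`, so `y n` never vanishes.
-/

/-- The inversion `ι(x) = (x₁, −x₂, …, −x_d)/(x₁² + ⋯ + x_d²)` on `ℝ^d`, with `ι(0) = 0`. -/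
noncomputable def iotaInv (d : ℕ) (x : Fin d → ℝ) : Fin d → ℝ :=
  if x = 0 then 0
  else fun i => (if (i : ℕ) = 0 then x i else -x i) / ∑ j, x j ^ 2

/-- The point `a = (0, 1, 1, …, 1) ∈ ℝ^d`. -/
def aVec (d : ℕ) : Fin d → ℝ := fun i => if (i : ℕ) = 0 then 0 else 1

lemma aVec_ne_zero {d : ℕ} (hd : 1 < d) : aVec d ≠ 0 := fun h => by
  simpa [aVec] using congrFun h ⟨1, hd⟩

lemma sum_aVec_sq (d : ℕ) : ∑ j, aVec d j ^ 2 = ((d - 1 : ℕ) : ℝ) := by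
  cases d with
  | zero => simp
  | succ m => simp [Fin.sum_univ_succ, aVec]

lemma iotaInv_smul_aVec (d : ℕ) {y : ℝ} (hy : y ≠ 0) :
    iotaInv d (y • aVec d) = -(((d - 1 : ℕ) : ℝ) * y)⁻¹ • aVec d := by
  by_cases h : y • aVec d = 0
  · rw [iotaInv, if_pos h, (smul_eq_zero_iff_right hy).mp h, smul_zero]
  have hsum : ∑ j, (y • aVec d) j ^ 2 = y ^ 2 * ((d - 1 : ℕ) : ℝ) := by
    simp only [Pi.smul_apply, smul_eq_mul, mul_pow, ← Finset.mul_sum, sum_aVec_sq]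
  funext i
  rw [iotaInv, if_neg h, hsum]
  by_cases hi : (i : ℕ) = 0
  · simp [hi, aVec]
  · simp only [hi, if_false, Pi.smul_apply, smul_eq_mul, aVec]
    field_simp

lemma half_le_one_sub_inv_mul {c y : ℝ} (hc : 4 ≤ c) (hy : 1 / 2 ≤ y) :
    1 / 2 ≤ 1 - (c * y)⁻¹ := by
  have : (c * y)⁻¹ ≤ 1 / 2 := by
    rw [inv_le_comm₀ (by nlinarith) (by norm_num)]
    nlinarith
  linarith

/-- Proposition 5.2: for `d > 4`, the continued fraction `a + [a, …, a]` never
vanishes; i.e. the sequence `w₁ = a`, `w_{n+1} = a + ι(w_n)` satisfies `w_n ≠ 0`. -/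
theorem no_quaternionic_identity_high_dim (d : ℕ) (hd : 4 < d)
    (w : ℕ → Fin d → ℝ) (h1 : w 1 = aVec d)
    (hrec : ∀ n : ℕ, 1 ≤ n → w (n + 1) = aVec d + iotaInv d (w n)) :
    ∀ n : ℕ, 1 ≤ n → w n ≠ 0 := by
  have hc : (4 : ℝ) ≤ ((d - 1 : ℕ) : ℝ) := by exact_mod_cast (by omega : 4 ≤ d - 1)
  have on_ray : ∀ n, 1 ≤ n → ∃ y : ℝ, 1 / 2 ≤ y ∧ w n = y • aVec d := by
    intro n hn
    induction n, hn using Nat.le_induction with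
    | base => exact ⟨1, by norm_num, by rw [h1, one_smul]⟩
    | succ n hn ih =>
      obtain ⟨y, hy, hwy⟩ := ih
      refine ⟨1 - (((d - 1 : ℕ) : ℝ) * y)⁻¹, half_le_one_sub_inv_mul hc hy, ?_⟩
      rw [hrec n hn, hwy, iotaInv_smul_aVec d (by linarith), sub_smul, one_smul, neg_smul,
        sub_eq_add_neg]
  intro n hn
  obtain ⟨y, hy, hwy⟩ := on_ray n hn
  rw [hwy]
  exact smul_ne_zero (by linarith) (aVec_ne_zero (by omega))
end

section
/- Let d be a real number with d > 5, set x₋ = (1 − √(1 − 4/(d−1)))/2 and x₊ = (1 + √(1 − 4/(d−1)))/2, and define f(t) = 1 − 1/((d−1)·t). Then 0 < x₋ < x₊, and f maps the interval [x₋, x₊] into itself: for every t with x₋ ≤ t ≤ x₊ one has x₋ ≤ f(t) ≤ x₊. (The dynamical-system step in the proof of Proposition 5.2 for d > 5.) -/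
/-- For `d > 5`, the fixed points `x₋ < x₊` of `f(t) = 1 − 1/((d−1)·t)` are positive
and `f` maps the interval `[x₋, x₊]` into itself. -/
theorem interval_invariant_under_recurrence (d : ℝ) (hd : 5 < d) :
    0 < (1 - Real.sqrt (1 - 4 / (d - 1))) / 2 ∧
    (1 - Real.sqrt (1 - 4 / (d - 1))) / 2 < (1 + Real.sqrt (1 - 4 / (d - 1))) / 2 ∧
    ∀ t : ℝ, (1 - Real.sqrt (1 - 4 / (d - 1))) / 2 ≤ t →
      t ≤ (1 + Real.sqrt (1 - 4 / (d - 1))) / 2 →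
      (1 - Real.sqrt (1 - 4 / (d - 1))) / 2 ≤ 1 - 1 / ((d - 1) * t) ∧
      1 - 1 / ((d - 1) * t) ≤ (1 + Real.sqrt (1 - 4 / (d - 1))) / 2 := by
  set s := Real.sqrt (1 - 4 / (d - 1)) with hs
  have hc0 : (0:ℝ) < d - 1 := by linarith
  have h1 : 0 < 1 - 4 / (d - 1) := by
    have : 4 / (d - 1) < 1 := (div_lt_one hc0).mpr (by linarith)
    linarith
  have hs2 : s ^ 2 = 1 - 4 / (d - 1) := Real.sq_sqrt h1.le
  have hkey : (d - 1) * (1 - s ^ 2) = 4 := by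
    rw [hs2]; field_simp; ring
  have hs0 : 0 < s := Real.sqrt_pos.mpr h1
  have h4c : 0 < 4 / (d - 1) := by positivity
  have hs1 : s < 1 := by nlinarith
  refine ⟨by linarith, by linarith, fun t ht1 ht2 => ?_⟩
  have ht0 : 0 < t := by linarith
  have htc : 0 < (d - 1) * t := mul_pos hc0 ht0
  have hinv : 1 / ((d - 1) * t) * ((d - 1) * t) = 1 := one_div_mul_cancel htc.ne'
  have hu0 : 0 < 1 / ((d - 1) * t) := by positivity
  constructor
  · nlinarith [mul_pos hu0 hc0, mul_le_mul_of_nonneg_left ht1 (mul_pos hu0 hc0).le]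
  · nlinarith [mul_pos hu0 hc0, mul_le_mul_of_nonneg_left ht2 (mul_pos hu0 hc0).le]
end
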